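/- arXiv:1109.4190 — 4 statements merged into one kernel-verified Lean document; each statement's English description precedes it below -/
import Mathlib

section
/- The generic matrix g satisfies g = b₊ · a⁻¹ · b₋, where: a is the diagonal matrix with a_{i,i} = det(g; {i+1,…,n}, {i+1,…,n}) · det(g; {i,…,n}, {i,…,n}), i.e. a_{i,i} is the product of the trailing minor of size n−i and the trailing minor of size n−i+1 (with the empty determinant interpreted as 1); b₊ is the upper triangular matrix with (b₊)_{i,j} = det(g; {i} ∪ {j+1,…,n}, {j,…,n}) for i ≤ j and (b₊)_{i,j} = 0 for i > j; and b₋ is the lower triangular matrix with (b₋)_{i,j} = det(g; {i,…,n}, {j} ∪ {i+1,…,n}) for i ≥ j and (b₋)_{i,j} = 0 for i < j. (All diagonal entries of a are nonzero in K, so a is invertible.) -/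
/-- The field of fractions of `ℚ[a_{i,j} : i,j ∈ Fin n]`. -/
abbrev GenField (n : ℕ) : Type := FractionRing (MvPolynomial (Fin n × Fin n) ℚ)

/-- The generic `n × n` matrix, whose `(i,j)` entry is the indeterminate `a_{i,j}`. -/
noncomputable def genMat (n : ℕ) : Matrix (Fin n) (Fin n) (GenField n) :=
  fun i j => algebraMap (MvPolynomial (Fin n × Fin n) ℚ) (GenField n) (MvPolynomial.X (i, j))

/-- The determinant of the square submatrix of `M` with rows `R` and columns `C`
(each taken in increasing order); defined to be `0` if `R` and `C` have different
cardinalities.  The determinant of the empty submatrix is `1`. -/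
noncomputable def minorDet {K : Type*} [CommRing K] {n : ℕ} (M : Matrix (Fin n) (Fin n) K)
    (R C : Finset (Fin n)) : K :=
  if h : R.card = C.card then
    (M.submatrix (fun i => R.orderEmbOfFin rfl i) (fun i => C.orderEmbOfFin h.symm i)).det
  else 0


section AuxUDL

open Matrix Finset

variable {R : Type*} [CommRing R]

lemma det_updateColumn_single {m : ℕ} (A : Matrix (Fin (m+1)) (Fin (m+1)) R)
    (p r : Fin (m+1)) :
    (A.updateCol p (Pi.single r 1)).det
      = (-1) ^ ((r : ℕ) + (p : ℕ)) * (A.submatrix r.succAbove p.succAbove).det := by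
  rw [Matrix.det_succ_column _ p]
  rw [Finset.sum_eq_single r]
  · rw [Matrix.submatrix_updateCol_succAbove]
    simp [Matrix.updateCol_apply]
  · intro b _ hb
    simp [Matrix.updateCol_apply, Pi.single_apply, hb]
  · simp

lemma updateColumn_comm {m n : Type*} [DecidableEq n] (A : Matrix m n R) {p q : n}
    (hpq : p ≠ q) (u v : m → R) :
    (A.updateCol p u).updateCol q v = (A.updateCol q v).updateCol p u := by
  ext x y
  simp only [Matrix.updateCol_apply]
  rcases eq_or_ne y p with rfl | hy <;> rcases eq_or_ne y q with rfl | hy2 <;>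
    simp_all [hpq]

lemma det_one_updateColumn_single {m : ℕ} {p q : Fin m} (hpq : p ≠ q) (x y : Fin m) :
    (((1 : Matrix (Fin m) (Fin m) R).updateCol p (Pi.single y 1)).updateCol q
        (Pi.single x 1)).det
      = if y = p ∧ x = q then 1 else if y = q ∧ x = p then -1 else 0 := by
  by_cases h1 : y = p ∧ x = q
  · obtain ⟨rfl, rfl⟩ := h1
    have : (((1 : Matrix (Fin m) (Fin m) R).updateCol y (Pi.single y 1)).updateCol x
        (Pi.single x 1)) = 1 := by
      ext a b
      simp [Matrix.updateCol_apply, Pi.single_apply, Matrix.one_apply, eq_comm]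
      aesop
    rw [this]
    simp
  · by_cases h2 : y = q ∧ x = p
    · obtain ⟨rfl, rfl⟩ := h2
      have : (((1 : Matrix (Fin m) (Fin m) R).updateCol x (Pi.single y 1)).updateCol y
          (Pi.single x 1)) = (Equiv.swap x y).permMatrix R := by
        ext a b
        simp only [Matrix.updateCol_apply, Equiv.Perm.permMatrix, PEquiv.toMatrix_apply,
          Equiv.toPEquiv_apply, Option.mem_def, Option.some.injEq, Pi.single_apply,
          Matrix.one_apply]
        rcases eq_or_ne b y with rfl | hb <;> rcases eq_or_ne b x with rfl | hb2 <;>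
          simp_all [Equiv.swap_apply_def] <;> split_ifs <;> simp_all
      rw [this, Matrix.det_permutation, Equiv.Perm.sign_swap hpq]
      simp [h1]
    · rw [if_neg h1, if_neg h2]
      have col : ∀ b a : Fin m,
          (((1 : Matrix (Fin m) (Fin m) R).updateCol p (Pi.single y 1)).updateCol q
            (Pi.single x 1)) a b =
          if b = q then (Pi.single x 1 : Fin m → R) a
          else if b = p then (Pi.single y 1 : Fin m → R) a
          else (1 : Matrix (Fin m) (Fin m) R) a b := by
        intro b a; simp [Matrix.updateCol_apply]
      rcases eq_or_ne x y with rfl | hxy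
      · exact Matrix.det_zero_of_column_eq hpq (fun a => by
          rw [col, col]; simp [hpq])
      · rcases eq_or_ne x q with rfl | hxq
        · have hyp : y ≠ p := fun h => h1 ⟨h, rfl⟩
          refine Matrix.det_zero_of_column_eq (show p ≠ y from Ne.symm hyp) (fun a => ?_)
          rw [col, col]
          simp [hpq, hyp, (Ne.symm hxy : y ≠ x), Matrix.one_apply, Pi.single_apply, eq_comm]
        · rcases eq_or_ne x p with rfl | hxp
          · have hyq : y ≠ q := fun h => h2 ⟨h, rfl⟩
            refine Matrix.det_zero_of_column_eq (show x ≠ y from hxy) (fun a => ?_)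
            rw [col, col]
            simp [hpq, hyq, (Ne.symm hxy : y ≠ x), Matrix.one_apply, Pi.single_apply, eq_comm]
          · refine Matrix.det_zero_of_column_eq (show q ≠ x from Ne.symm hxq) (fun a => ?_)
            rw [col, col]
            simp [hxq, hxp, Matrix.one_apply, Pi.single_apply, eq_comm]

lemma det_updateColumn_finset_sum {m : Type*} [DecidableEq m] [Fintype m]
    (A : Matrix m m R) (j : m) {ι : Type*} (s : Finset ι) (f : ι → m → R) :
    (A.updateCol j (∑ x ∈ s, f x)).det = ∑ x ∈ s, (A.updateCol j (f x)).det := by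
  classical
  induction s using Finset.induction with
  | empty => simp [Matrix.det_eq_zero_of_column_eq_zero j, Matrix.updateCol_apply]
  | insert x s hx ih =>
    rw [Finset.sum_insert hx, Matrix.det_updateCol_add, ih, Finset.sum_insert hx]

lemma single_expand {m : Type*} [DecidableEq m] [Fintype m] (w : m → R) :
    w = ∑ x : m, w x • (Pi.single x 1 : m → R) := by
  funext a
  simp [Pi.single_apply, eq_comm]

/-- determinant of the identity with columns `p ≠ q` replaced by `v`, `w`. -/

lemma det_one_two_columns {m : ℕ} {p q : Fin m} (hpq : p ≠ q) (v w : Fin m → R) :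
    (((1 : Matrix (Fin m) (Fin m) R).updateCol p v).updateCol q w).det
      = v p * w q - v q * w p := by
  conv_lhs => rw [single_expand w, det_updateColumn_finset_sum]
  have step : ∀ x : Fin m,
      ((((1 : Matrix (Fin m) (Fin m) R).updateCol p v).updateCol q)
        (w x • (Pi.single x 1 : Fin m → R))).det
      = w x * (v p * (if x = q then 1 else 0) - v q * (if x = p then 1 else 0)) := by
    intro x
    rw [Matrix.det_updateCol_smul]
    rw [updateColumn_comm _ hpq]
    conv_lhs => rw [single_expand v, det_updateColumn_finset_sum]
    have step2 : ∀ y : Fin m,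
        ((((1 : Matrix (Fin m) (Fin m) R).updateCol q (Pi.single x 1)).updateCol p)
          (v y • (Pi.single y 1 : Fin m → R))).det
        = v y * (if y = p ∧ x = q then 1 else if y = q ∧ x = p then -1 else 0) := by
      intro y
      rw [Matrix.det_updateCol_smul, updateColumn_comm _ (Ne.symm hpq),
        det_one_updateColumn_single hpq]
    rw [Finset.sum_congr rfl (fun y _ => step2 y)]
    rcases eq_or_ne x q with rfl | hxq
    · simp [hpq, Ne.symm hpq, Finset.sum_ite_eq', mul_comm]
    · rcases eq_or_ne x p with rfl | hxp
      · simp [hpq, Ne.symm hpq, hxq, Finset.sum_ite_eq', mul_comm]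
      · simp [hxq, hxp]
  rw [Finset.sum_congr rfl (fun x _ => step x)]
  simp only [mul_sub, mul_ite, mul_one, mul_zero]
  rw [Finset.sum_sub_distrib]
  simp [Finset.sum_ite_eq', mul_comm]

lemma mul_updateColumn {m : Type*} [DecidableEq m] [Fintype m]
    (A B : Matrix m m R) (j : m) (c : m → R) :
    A * (B.updateCol j c) = (A * B).updateCol j (A.mulVec c) := by
  ext x y
  simp only [Matrix.mul_apply, Matrix.updateCol_apply, Matrix.mulVec, dotProduct]
  rcases eq_or_ne y j with rfl | hy <;> simp [*]

/-- Raw 2×2 Jacobi identity (with a factor of `det A`). -/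

lemma jacobi_raw {m : ℕ} (A : Matrix (Fin m) (Fin m) R) {p q : Fin m} (hpq : p ≠ q)
    (r s : Fin m) :
    A.det * (A.cramer (Pi.single r 1) p * A.cramer (Pi.single s 1) q
        - A.cramer (Pi.single r 1) q * A.cramer (Pi.single s 1) p)
      = A.det ^ 2 * ((A.updateCol p (Pi.single r 1)).updateCol q (Pi.single s 1)).det := by
  have key : A * (((1 : Matrix (Fin m) (Fin m) R).updateCol p
        (A.cramer (Pi.single r 1))).updateCol q (A.cramer (Pi.single s 1)))
      = ((A.updateCol p (A.det • (Pi.single r 1 : Fin m → R))).updateCol q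
        (A.det • (Pi.single s 1 : Fin m → R))) := by
    rw [mul_updateColumn, mul_updateColumn, Matrix.mul_one, Matrix.mulVec_cramer,
      Matrix.mulVec_cramer]
  have h1 := congrArg Matrix.det key
  rw [Matrix.det_mul, det_one_two_columns hpq] at h1
  rw [Matrix.det_updateCol_smul, updateColumn_comm _ hpq,
    Matrix.det_updateCol_smul, updateColumn_comm _ (Ne.symm hpq)] at h1
  rw [h1]; ring

lemma minorDet_eq {K : Type*} [CommRing K] {n m : ℕ} (M : Matrix (Fin n) (Fin n) K)
    {S T : Finset (Fin n)} (hS : S.card = m) (hT : T.card = m) :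
    minorDet M S T = (M.submatrix (S.orderEmbOfFin hS) (T.orderEmbOfFin hT)).det := by
  subst hS
  unfold minorDet
  rw [dif_pos hT.symm]

lemma orderEmbOfFin_succAbove {n m : ℕ} (S : Finset (Fin n)) (hS : S.card = m + 1)
    (r : Fin (m + 1)) (x : Fin m) :
    S.orderEmbOfFin hS (r.succAbove x)
      = (S.erase (S.orderEmbOfFin hS r)).orderEmbOfFin
          (by rw [Finset.card_erase_of_mem (Finset.orderEmbOfFin_mem _ _ _), hS]; rfl) x := by
  have h := Finset.orderEmbOfFin_unique
    (s := S.erase (S.orderEmbOfFin hS r)) (k := m)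
    (by rw [Finset.card_erase_of_mem (Finset.orderEmbOfFin_mem _ _ _), hS]; rfl)
    (f := fun x => S.orderEmbOfFin hS (r.succAbove x))
    (fun x => Finset.mem_erase.2 ⟨(S.orderEmbOfFin hS).injective.ne (Fin.succAbove_ne r x),
      Finset.orderEmbOfFin_mem _ _ _⟩)
    ((S.orderEmbOfFin hS).strictMono.comp (Fin.strictMono_succAbove r))
  exact (congrFun h x).symm ▸ (congrFun h.symm x).symm

lemma orderEmbOfFin_congr {α : Type*} [LinearOrder α] {S T : Finset α} {m : ℕ}
    (h : S = T) (hS : S.card = m) (x : Fin m) :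
    S.orderEmbOfFin hS x = T.orderEmbOfFin (h ▸ hS) x := by subst h; rfl

lemma submatrix_erase_eq {K : Type*} [CommRing K] {n m : ℕ} (M : Matrix (Fin n) (Fin n) K)
    (S T : Finset (Fin n)) (hS : S.card = m + 1) (hT : T.card = m + 1) (r p : Fin (m + 1))
    (S' T' : Finset (Fin n)) (hS' : S.erase (S.orderEmbOfFin hS r) = S')
    (hT' : T.erase (T.orderEmbOfFin hT p) = T') (hS'c : S'.card = m) (hT'c : T'.card = m) :
    (M.submatrix (⇑(S.orderEmbOfFin hS)) (⇑(T.orderEmbOfFin hT))).submatrix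
        r.succAbove p.succAbove
      = M.submatrix (⇑(S'.orderEmbOfFin hS'c)) (⇑(T'.orderEmbOfFin hT'c)) := by
  have hrow : ⇑(S.orderEmbOfFin hS) ∘ r.succAbove = ⇑(S'.orderEmbOfFin hS'c) := by
    funext x
    rw [Function.comp_apply, orderEmbOfFin_succAbove S hS r x, orderEmbOfFin_congr hS']
  have hcol : ⇑(T.orderEmbOfFin hT) ∘ p.succAbove = ⇑(T'.orderEmbOfFin hT'c) := by
    funext x
    rw [Function.comp_apply, orderEmbOfFin_succAbove T hT p x, orderEmbOfFin_congr hT']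
  rw [Matrix.submatrix_submatrix, hrow, hcol]

lemma det_submatrix_erase {K : Type*} [CommRing K] {n m : ℕ} (M : Matrix (Fin n) (Fin n) K)
    (S T : Finset (Fin n)) (hS : S.card = m + 1) (hT : T.card = m + 1) (r p : Fin (m + 1))
    (S' T' : Finset (Fin n)) (hS' : S.erase (S.orderEmbOfFin hS r) = S')
    (hT' : T.erase (T.orderEmbOfFin hT p) = T') (hS'c : S'.card = m) (hT'c : T'.card = m) :
    ((M.submatrix (⇑(S.orderEmbOfFin hS)) (⇑(T.orderEmbOfFin hT))).submatrix
        r.succAbove p.succAbove).det = minorDet M S' T' := by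
  rw [submatrix_erase_eq M S T hS hT r p S' T' hS' hT' hS'c hT'c, minorDet_eq M hS'c hT'c]

lemma min'_eq_of {α : Type*} [LinearOrder α] (S : Finset α) (hne : S.Nonempty) (a : α)
    (ha : a ∈ S) (h : ∀ b ∈ S, a ≤ b) : S.min' hne = a :=
  le_antisymm (Finset.min'_le S a ha) (Finset.le_min' _ _ _ h)

lemma orderEmbOfFin_zero_eq {α : Type*} [LinearOrder α] {S : Finset α} {m : ℕ}
    (hS : S.card = m + 1) (a : α) (ha : a ∈ S) (h : ∀ b ∈ S, a ≤ b) :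
    S.orderEmbOfFin hS 0 = a := by
  rw [show (0 : Fin (m+1)) = ⟨0, Nat.succ_pos m⟩ from rfl,
    Finset.orderEmbOfFin_zero hS (Nat.succ_pos m)]
  exact min'_eq_of S _ a ha h

lemma submatrix_updateColumn_single_comm {K : Type*} [CommRing K] {a b : ℕ}
    (A : Matrix (Fin (b + 1)) (Fin (b + 1)) K) (f g : Fin (a + 1) → Fin (b + 1))
    (hf : Function.Injective f) (hg : Function.Injective g)
    (p : Fin (b + 1)) (p' : Fin (a + 1)) (hp : g p' = p)
    (r : Fin (b + 1)) (r' : Fin (a + 1)) (hr : f r' = r) :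
    (A.updateCol p (Pi.single r 1)).submatrix f g
      = (A.submatrix f g).updateCol p' (Pi.single r' 1) := by
  ext x y
  simp only [Matrix.submatrix_apply, Matrix.updateCol_apply, Pi.single_apply]
  by_cases hy : y = p'
  · subst hy
    rw [if_pos hp, if_pos rfl]
    by_cases hx : x = r'
    · simp [hx, hr]
    · rw [if_neg (fun h => hx (hf (by rw [h, hr]))), if_neg hx]
  · rw [if_neg (fun h => hy (hg (by rw [h, hp]))), if_neg hy]

lemma jacobi_minor {K : Type*} [Field K] {n : ℕ} (M : Matrix (Fin n) (Fin n) K)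
    {i j k : Fin n} (hik : i < k) (hjk : j < k)
    (hA : minorDet M (insert i (Finset.Ici k)) (insert j (Finset.Ici k)) ≠ 0) :
    minorDet M (Finset.Ici k) (Finset.Ici k) *
        minorDet M (insert i (Finset.Ioi k)) (insert j (Finset.Ioi k))
      - minorDet M (Finset.Ici k) (insert j (Finset.Ioi k)) *
        minorDet M (insert i (Finset.Ioi k)) (Finset.Ici k)
      = minorDet M (insert i (Finset.Ici k)) (insert j (Finset.Ici k)) *
        minorDet M (Finset.Ioi k) (Finset.Ioi k) := by
  classical
  set c := (Finset.Ioi k).card with hc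
  have hIoiIci : insert k (Finset.Ioi k) = Finset.Ici k := Finset.Ioi_insert k
  have hkIoi : k ∉ Finset.Ioi k := by simp
  have hIci : (Finset.Ici k).card = c + 1 := by
    rw [← hIoiIci, Finset.card_insert_of_notMem hkIoi]
  have hiIci : i ∉ Finset.Ici k := by simp [hik.not_ge]
  have hjIci : j ∉ Finset.Ici k := by simp [hjk.not_ge]
  have hiIoi : i ∉ Finset.Ioi k := by simp [hik.asymm]
  have hjIoi : j ∉ Finset.Ioi k := by simp [hjk.asymm]
  have hik' : i ≠ k := hik.ne
  have hjk' : j ≠ k := hjk.ne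
  set S := insert i (Finset.Ici k) with hSdef
  set T := insert j (Finset.Ici k) with hTdef
  have hS : S.card = c + 1 + 1 := by rw [hSdef, Finset.card_insert_of_notMem hiIci, hIci]
  have hT : T.card = c + 1 + 1 := by rw [hTdef, Finset.card_insert_of_notMem hjIci, hIci]
  have hiIokc : (insert i (Finset.Ioi k)).card = c + 1 :=
    Finset.card_insert_of_notMem hiIoi
  have hjIokc : (insert j (Finset.Ioi k)).card = c + 1 :=
    Finset.card_insert_of_notMem hjIoi
  -- smallest elements
  have heS0 : S.orderEmbOfFin hS 0 = i :=
    orderEmbOfFin_zero_eq hS i (Finset.mem_insert_self _ _) (by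
      intro b hb
      rcases Finset.mem_insert.1 hb with rfl | hb
      · exact le_rfl
      · exact hik.le.trans (Finset.mem_Ici.1 hb))
  have heT0 : T.orderEmbOfFin hT 0 = j :=
    orderEmbOfFin_zero_eq hT j (Finset.mem_insert_self _ _) (by
      intro b hb
      rcases Finset.mem_insert.1 hb with rfl | hb
      · exact le_rfl
      · exact hjk.le.trans (Finset.mem_Ici.1 hb))
  -- second smallest elements
  have hSer0 : S.erase (S.orderEmbOfFin hS 0) = Finset.Ici k := by
    rw [heS0, hSdef, Finset.erase_insert hiIci]
  have hTer0 : T.erase (T.orderEmbOfFin hT 0) = Finset.Ici k := by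
    rw [heT0, hTdef, Finset.erase_insert hjIci]
  have hone : (1 : Fin (c + 1 + 1)) = (0 : Fin (c + 1 + 1)).succAbove (0 : Fin (c + 1)) := by
    rw [Fin.succAbove_zero, Fin.succ_zero_eq_one]
  have heS1 : S.orderEmbOfFin hS 1 = k := by
    rw [hone, orderEmbOfFin_succAbove S hS 0 0, orderEmbOfFin_congr hSer0]
    exact orderEmbOfFin_zero_eq _ k (Finset.mem_Ici.mpr le_rfl)
      (fun b hb => Finset.mem_Ici.1 hb)
  have heT1 : T.orderEmbOfFin hT 1 = k := by
    rw [hone, orderEmbOfFin_succAbove T hT 0 0, orderEmbOfFin_congr hTer0]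
    exact orderEmbOfFin_zero_eq _ k (Finset.mem_Ici.mpr le_rfl)
      (fun b hb => Finset.mem_Ici.1 hb)
  have hSer1 : S.erase (S.orderEmbOfFin hS 1) = insert i (Finset.Ioi k) := by
    rw [heS1, hSdef, ← hIoiIci, Finset.insert_comm,
      Finset.erase_insert (by simp [hkIoi, Ne.symm hik'])]
  have hTer1 : T.erase (T.orderEmbOfFin hT 1) = insert j (Finset.Ioi k) := by
    rw [heT1, hTdef, ← hIoiIci, Finset.insert_comm,
      Finset.erase_insert (by simp [hkIoi, Ne.symm hjk'])]
  set A := M.submatrix (⇑(S.orderEmbOfFin hS)) (⇑(T.orderEmbOfFin hT)) with hAdef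
  have hdetA : A.det = minorDet M S T := (minorDet_eq M hS hT).symm
  have hcr : ∀ (r p : Fin (c+1+1)) (S' T' : Finset (Fin n))
      (hS' : S.erase (S.orderEmbOfFin hS r) = S') (hT' : T.erase (T.orderEmbOfFin hT p) = T')
      (hS'c : S'.card = c+1) (hT'c : T'.card = c+1),
      A.cramer (Pi.single r 1) p = (-1)^((r:ℕ)+(p:ℕ)) * minorDet M S' T' := by
    intro r p S' T' hS' hT' hS'c hT'c
    rw [Matrix.cramer_apply, hAdef, det_updateColumn_single,
      det_submatrix_erase M S T hS hT r p S' T' hS' hT' hS'c hT'c]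
  have hv00 := hcr 0 0 (Finset.Ici k) (Finset.Ici k) hSer0 hTer0 hIci hIci
  have hv01 := hcr 0 1 (Finset.Ici k) (insert j (Finset.Ioi k)) hSer0 hTer1 hIci hjIokc
  have hv10 := hcr 1 0 (insert i (Finset.Ioi k)) (Finset.Ici k) hSer1 hTer0 hiIokc hIci
  have hv11 := hcr 1 1 (insert i (Finset.Ioi k)) (insert j (Finset.Ioi k)) hSer1 hTer1
    hiIokc hjIokc
  have hsa10 : (1 : Fin (c+1+1)).succAbove (0 : Fin (c+1)) = 0 := by
    rw [Fin.succAbove_of_castSucc_lt] <;> simp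
  have hIoiEr : (insert i (Finset.Ioi k)).erase
      ((insert i (Finset.Ioi k)).orderEmbOfFin hiIokc 0) = Finset.Ioi k := by
    rw [orderEmbOfFin_zero_eq hiIokc i (Finset.mem_insert_self _ _) (by
      intro b hb
      rcases Finset.mem_insert.1 hb with rfl | hb
      · exact le_rfl
      · exact (hik.trans (Finset.mem_Ioi.1 hb)).le)]
    exact Finset.erase_insert hiIoi
  have hIojEr : (insert j (Finset.Ioi k)).erase
      ((insert j (Finset.Ioi k)).orderEmbOfFin hjIokc 0) = Finset.Ioi k := by
    rw [orderEmbOfFin_zero_eq hjIokc j (Finset.mem_insert_self _ _) (by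
      intro b hb
      rcases Finset.mem_insert.1 hb with rfl | hb
      · exact le_rfl
      · exact (hjk.trans (Finset.mem_Ioi.1 hb)).le)]
    exact Finset.erase_insert hjIoi
  have hdetC : ((A.updateCol 0 (Pi.single 0 1)).updateCol 1 (Pi.single 1 1)).det
      = minorDet M (Finset.Ioi k) (Finset.Ioi k) := by
    rw [det_updateColumn_single (A.updateCol 0 (Pi.single 0 1)) 1 1,
      submatrix_updateColumn_single_comm A _ _
        (Fin.succAbove_right_injective) (Fin.succAbove_right_injective) 0 0 hsa10 0 0 hsa10,
      hAdef, submatrix_erase_eq M S T hS hT 1 1 _ _ hSer1 hTer1 hiIokc hjIokc,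
      det_updateColumn_single, det_submatrix_erase M _ _ hiIokc hjIokc 0 0
        (Finset.Ioi k) (Finset.Ioi k) hIoiEr hIojEr hc.symm hc.symm]
    norm_num
  have h01 : (0 : Fin (c+1+1)) ≠ 1 := by
    simp [Fin.ext_iff]
  have raw := jacobi_raw A h01 0 1
  rw [hv00, hv01, hv10, hv11, hdetA, hdetC] at raw
  norm_num at raw
  refine mul_left_cancel₀ hA ?_
  linear_combination raw

lemma minor_ne_zero (n : ℕ) (R C : Finset (Fin n)) (h : R.card = C.card) :
    minorDet (genMat n) R C ≠ 0 := by
  classical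
  unfold minorDet
  rw [dif_pos h]
  set eR : Fin R.card → Fin n := fun i => R.orderEmbOfFin rfl i with heR
  set eC : Fin R.card → Fin n := fun i => C.orderEmbOfFin h.symm i with heC
  set f := algebraMap (MvPolynomial (Fin n × Fin n) ℚ) (GenField n) with hf
  have hmat : (genMat n).submatrix eR eC
      = (f : MvPolynomial (Fin n × Fin n) ℚ →+* GenField n).mapMatrix
        (Matrix.of fun s t => MvPolynomial.X (eR s, eC t)) := by
    ext s t; rfl
  rw [hmat, ← RingHom.map_det]
  have hinj : Function.Injective f := IsFractionRing.injective _ _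
  rw [Ne, ← map_zero (f : MvPolynomial (Fin n × Fin n) ℚ →+* GenField n)]
  intro hcontra
  have hdet0 : (Matrix.of fun s t => MvPolynomial.X (eR s, eC t) :
      Matrix (Fin R.card) (Fin R.card) (MvPolynomial (Fin n × Fin n) ℚ)).det = 0 :=
    hinj hcontra
  -- evaluate at the "permutation-like" point
  set φ : MvPolynomial (Fin n × Fin n) ℚ →+* ℚ :=
    (MvPolynomial.aeval (fun uv : Fin n × Fin n =>
      if ∃ t : Fin R.card, eR t = uv.1 ∧ eC t = uv.2 then (1 : ℚ) else 0)).toRingHom with hφ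
  have heval := congrArg φ hdet0
  rw [RingHom.map_det, map_zero] at heval
  have hone : (φ.mapMatrix (Matrix.of fun s t => MvPolynomial.X (eR s, eC t)))
      = (1 : Matrix (Fin R.card) (Fin R.card) ℚ) := by
    ext s t
    have hiR : Function.Injective eR := (R.orderEmbOfFin rfl).injective
    have hiC : Function.Injective eC := (C.orderEmbOfFin h.symm).injective
    simp only [RingHom.mapMatrix_apply, Matrix.map_apply, Matrix.of_apply, hφ,
      AlgHom.toRingHom_eq_coe, AlgHom.coe_toRingHom, MvPolynomial.aeval_X]
    rcases eq_or_ne s t with rfl | hst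
    · rw [if_pos ⟨s, rfl, rfl⟩, Matrix.one_apply_eq]
    · rw [if_neg, Matrix.one_apply_ne hst]
      rintro ⟨u, hu1, hu2⟩
      exact hst ((hiR hu1).symm.trans (hiC hu2))
  rw [hone, Matrix.det_one] at heval
  exact one_ne_zero heval

lemma minorDet_empty {K : Type*} [CommRing K] {n : ℕ} (M : Matrix (Fin n) (Fin n) K) :
    minorDet M ∅ ∅ = 1 := by
  rw [minorDet_eq M (Finset.card_empty) (Finset.card_empty), Matrix.det_fin_zero]

lemma minorDet_singleton {K : Type*} [CommRing K] {n : ℕ} (M : Matrix (Fin n) (Fin n) K)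
    (i j : Fin n) : minorDet M {i} {j} = M i j := by
  rw [minorDet_eq M (Finset.card_singleton i) (Finset.card_singleton j), Matrix.det_fin_one]
  rw [Matrix.submatrix_apply,
    orderEmbOfFin_zero_eq (Finset.card_singleton i) i (Finset.mem_singleton_self i)
      (fun b hb => (Finset.mem_singleton.1 hb).ge),
    orderEmbOfFin_zero_eq (Finset.card_singleton j) j (Finset.mem_singleton_self j)
      (fun b hb => (Finset.mem_singleton.1 hb).ge)]

lemma sum_gt (n : ℕ) (i j : Fin n) (d : ℕ) : ∀ (l : Fin n), i ≤ l → j ≤ l →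
    n ≤ l.val + d + 1 →
    ∑ k ∈ Finset.filter (fun k => l < k) Finset.univ,
      (minorDet (genMat n) (insert i (Finset.Ioi k)) (Finset.Ici k) *
        (minorDet (genMat n) (Finset.Ioi k) (Finset.Ioi k) *
         minorDet (genMat n) (Finset.Ici k) (Finset.Ici k))⁻¹ *
        minorDet (genMat n) (Finset.Ici k) (insert j (Finset.Ioi k)))
    = genMat n i j
      - minorDet (genMat n) (insert i (Finset.Ioi l)) (insert j (Finset.Ioi l)) /
        minorDet (genMat n) (Finset.Ioi l) (Finset.Ioi l) := by
  induction d with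
  | zero =>
    intro l hi hj hl
    have hlast : ∀ k : Fin n, ¬ l < k := by
      intro k hk
      have := k.isLt
      omega
    have hempty : Finset.filter (fun k => l < k) Finset.univ = ∅ := by
      ext k; simp [hlast k]
    have hIoi : Finset.Ioi l = ∅ := by
      ext k; simp [hlast k]
    rw [hempty, hIoi, Finset.sum_empty]
    rw [show insert i (∅ : Finset (Fin n)) = {i} from rfl,
      show insert j (∅ : Finset (Fin n)) = {j} from rfl,
      minorDet_singleton, minorDet_empty, div_one, sub_self]
  | succ d ih =>
    intro l hi hj hl
    by_cases hl1 : l.val + 1 < n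
    · set l' : Fin n := ⟨l.val + 1, hl1⟩ with hl'def
      have hll' : l < l' := by simp [Fin.lt_def, hl'def]
      have hfil : Finset.filter (fun k => l < k) Finset.univ
          = insert l' (Finset.filter (fun k => l' < k) Finset.univ) := by
        ext k
        simp only [Finset.mem_filter, Finset.mem_insert, Finset.mem_univ, true_and,
          Fin.lt_def, Fin.ext_iff, hl'def]
        omega
      have hnotmem : l' ∉ Finset.filter (fun k => l' < k) Finset.univ := by simp
      rw [hfil, Finset.sum_insert hnotmem]
      rw [ih l' (hi.trans hll'.le) (hj.trans hll'.le) (by simp [hl'def]; omega)]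
      -- now the Jacobi step at k = l'
      have hik : i < l' := lt_of_le_of_lt hi hll'
      have hjk : j < l' := lt_of_le_of_lt hj hll'
      have hIciIoi : Finset.Ici l' = Finset.Ioi l := by
        ext x
        simp only [Finset.mem_Ici, Finset.mem_Ioi, Fin.le_def, Fin.lt_def, hl'def]
        omega
      have hiIci : i ∉ Finset.Ici l' := by simp [hik.not_ge]
      have hjIci : j ∉ Finset.Ici l' := by simp [hjk.not_ge]
      have hcard : (insert i (Finset.Ici l')).card = (insert j (Finset.Ici l')).card := by
        rw [Finset.card_insert_of_notMem hiIci, Finset.card_insert_of_notMem hjIci]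
      have hA := minor_ne_zero n _ _ hcard
      have jac := jacobi_minor (genMat n) hik hjk hA
      have hΔ : minorDet (genMat n) (Finset.Ioi l') (Finset.Ioi l') ≠ 0 :=
        minor_ne_zero n _ _ rfl
      have hΔ' : minorDet (genMat n) (Finset.Ici l') (Finset.Ici l') ≠ 0 :=
        minor_ne_zero n _ _ rfl
      rw [← hIciIoi]
      set Δ := minorDet (genMat n) (Finset.Ioi l') (Finset.Ioi l')
      set Δ' := minorDet (genMat n) (Finset.Ici l') (Finset.Ici l')
      set N := minorDet (genMat n) (insert i (Finset.Ioi l')) (insert j (Finset.Ioi l'))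
      set D := minorDet (genMat n) (insert i (Finset.Ici l')) (insert j (Finset.Ici l'))
      set bp := minorDet (genMat n) (insert i (Finset.Ioi l')) (Finset.Ici l')
      set bm := minorDet (genMat n) (Finset.Ici l') (insert j (Finset.Ioi l'))
      -- jac : Δ' * N - bm * bp = D * Δ
      -- goal : bp * (Δ * Δ')⁻¹ * bm + (g i j - N / Δ) = g i j - D / Δ'
      have h1 : bp * (Δ * Δ')⁻¹ * bm = (bm * bp) / (Δ * Δ') := by ring
      have h2 : N / Δ - D / Δ' = (N * Δ' - D * Δ) / (Δ * Δ') := by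
        rw [div_sub_div _ _ hΔ hΔ', mul_comm Δ D]
      have ht : bp * (Δ * Δ')⁻¹ * bm = N / Δ - D / Δ' := by
        rw [h1, h2]
        congr 1
        linear_combination -jac
      rw [ht]
      ring
    · -- l is the last index; the filter is empty and Ioi l = ∅, same as base
      have hlast : ∀ k : Fin n, ¬ l < k := by
        intro k hk
        have := k.isLt
        omega
      have hempty : Finset.filter (fun k => l < k) Finset.univ = ∅ := by
        ext k; simp [hlast k]
      have hIoi : Finset.Ioi l = ∅ := by
        ext k; simp [hlast k]
      rw [hempty, hIoi, Finset.sum_empty]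
      rw [show insert i (∅ : Finset (Fin n)) = {i} from rfl,
        show insert j (∅ : Finset (Fin n)) = {j} from rfl,
        minorDet_singleton, minorDet_empty, div_one, sub_self]

end AuxUDL

/-- the generic matrix `g` factors as `g = b₊ · a⁻¹ · b₋` where the
entries of the upper triangular matrix `b₊`, of the diagonal matrix `a`, and of the
lower triangular matrix `b₋` are the indicated minors of `g` (0-based indices; the
1-based set `{i+1,…,n}` is `Finset.Ioi i`, `{i,…,n}` is `Finset.Ici i`); moreover all
diagonal entries of `a` are nonzero, so `a` is invertible. -/

theorem generic_UDL_with_minor_entries (n : ℕ) (hn : 1 ≤ n)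
    (a : Fin n → GenField n)
    (ha : ∀ i : Fin n, a i =
      minorDet (genMat n) (Finset.Ioi i) (Finset.Ioi i) *
        minorDet (genMat n) (Finset.Ici i) (Finset.Ici i))
    (bp : Matrix (Fin n) (Fin n) (GenField n))
    (hbp : ∀ i j : Fin n, bp i j =
      if i ≤ j then minorDet (genMat n) (insert i (Finset.Ioi j)) (Finset.Ici j) else 0)
    (bm : Matrix (Fin n) (Fin n) (GenField n))
    (hbm : ∀ i j : Fin n, bm i j =
      if j ≤ i then minorDet (genMat n) (Finset.Ici i) (insert j (Finset.Ioi i)) else 0) :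
    (∀ i : Fin n, a i ≠ 0) ∧ genMat n = bp * (Matrix.diagonal a)⁻¹ * bm := by
  classical
  have haNZ : ∀ i : Fin n, a i ≠ 0 := by
    intro i
    rw [ha i]
    exact mul_ne_zero (minor_ne_zero n _ _ rfl) (minor_ne_zero n _ _ rfl)
  refine ⟨haNZ, ?_⟩
  have hinv : (Matrix.diagonal a)⁻¹ = Matrix.diagonal (fun k => (a k)⁻¹) := by
    refine Matrix.inv_eq_right_inv ?_
    rw [Matrix.diagonal_mul_diagonal]
    have : (fun k => a k * (a k)⁻¹) = fun _ => (1 : GenField n) := by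
      funext k; exact mul_inv_cancel₀ (haNZ k)
    rw [this, Matrix.diagonal_one]
  ext i j
  rw [hinv]
  have hentry : (bp * Matrix.diagonal (fun k => (a k)⁻¹) * bm) i j
      = ∑ k, bp i k * (a k)⁻¹ * bm k j := by
    rw [Matrix.mul_apply]
    exact Finset.sum_congr rfl (fun k _ => by rw [Matrix.mul_diagonal])
  rw [hentry]
  set m := max i j with hm
  rw [← Finset.sum_filter_add_sum_filter_not Finset.univ (fun k => m ≤ k)]
  have hzero : ∑ k ∈ Finset.filter (fun k => ¬ m ≤ k) Finset.univ,
      bp i k * (a k)⁻¹ * bm k j = 0 := by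
    refine Finset.sum_eq_zero (fun k hk => ?_)
    have hk' : k < m := lt_of_not_ge (Finset.mem_filter.1 hk).2
    rcases lt_max_iff.1 (hm ▸ hk') with h | h
    · rw [hbp, if_neg (not_le.2 h), zero_mul, zero_mul]
    · rw [hbm, if_neg (not_le.2 h), mul_zero]
  rw [hzero, add_zero]
  have hfil : Finset.filter (fun k => m ≤ k) Finset.univ
      = insert m (Finset.filter (fun k => m < k) Finset.univ) := by
    ext k
    simp only [Finset.mem_filter, Finset.mem_insert, Finset.mem_univ, true_and]
    constructor
    · intro h; rcases eq_or_lt_of_le h with h' | h'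
      · exact Or.inl h'.symm
      · exact Or.inr h'
    · rintro (rfl | h)
      · exact le_rfl
      · exact h.le
  rw [hfil, Finset.sum_insert (by simp)]
  have hterm : ∀ k ∈ Finset.filter (fun k => m < k) Finset.univ,
      bp i k * (a k)⁻¹ * bm k j
      = minorDet (genMat n) (insert i (Finset.Ioi k)) (Finset.Ici k) *
        (minorDet (genMat n) (Finset.Ioi k) (Finset.Ioi k) *
         minorDet (genMat n) (Finset.Ici k) (Finset.Ici k))⁻¹ *
        minorDet (genMat n) (Finset.Ici k) (insert j (Finset.Ioi k)) := by
    intro k hk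
    have hk' : m < k := (Finset.mem_filter.1 hk).2
    have hik : i ≤ k := (le_max_left i j).trans (hm ▸ hk'.le)
    have hjk : j ≤ k := (le_max_right i j).trans (hm ▸ hk'.le)
    rw [hbp, hbm, ha, if_pos hik, if_pos hjk]
  rw [Finset.sum_congr rfl hterm,
    sum_gt n i j n m (le_max_left i j) (le_max_right i j) (by omega)]
  -- the top term
  have hmm : i ≤ m := le_max_left i j
  have hjm : j ≤ m := le_max_right i j
  have hIoiIci : insert m (Finset.Ioi m) = Finset.Ici m := Finset.Ioi_insert m
  have hΔ : minorDet (genMat n) (Finset.Ioi m) (Finset.Ioi m) ≠ 0 :=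
    minor_ne_zero n _ _ rfl
  have hΔ' : minorDet (genMat n) (Finset.Ici m) (Finset.Ici m) ≠ 0 :=
    minor_ne_zero n _ _ rfl
  have htop : bp i m * (a m)⁻¹ * bm m j
      = minorDet (genMat n) (insert i (Finset.Ioi m)) (insert j (Finset.Ioi m)) /
        minorDet (genMat n) (Finset.Ioi m) (Finset.Ioi m) := by
    rcases le_or_gt i j with hij | hij
    · have hmj : m = j := max_eq_right hij
      rw [hmj] at hΔ hΔ' ⊢
      rw [hbp, hbm, ha, if_pos hij, if_pos le_rfl, Finset.Ioi_insert j]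
      field_simp
    · have hmi : m = i := max_eq_left hij.le
      rw [hmi] at hΔ hΔ' ⊢
      rw [hbp, hbm, ha, if_pos le_rfl, if_pos hij.le, Finset.Ioi_insert i]
      field_simp
  rw [htop]
  ring
end

section
/- Assume n ≥ 2. Suppose ã_1, …, ã_n ∈ K are such that the matrix A′, obtained from A by replacing its last column with (ã_1, …, ã_n)ᵗ, satisfies det(A′; {k,…,n}, {k,…,n}) = (−1)^{n−k} · a_{k,n} · det(A; {k+1,…,n}, {k,…,n−1}) for every 1 ≤ k ≤ n. Then for every 1 ≤ i ≤ n−1 one has det(A′; {i} ∪ {i+2,…,n}, {i+1,…,n}) / det(A′; {i+1,…,n}, {i+1,…,n}) = a_{i,n} / a_{i+1,n} + det(A; {i} ∪ {i+2,…,n}, {i,…,n−1}) / det(A; {i+1,…,n}, {i,…,n−1}); all denominators appearing here are nonzero elements of K. -/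
/-!
Let `T` be the trailing square block of `A'` on the indices `i, …, n - 1`. The Desnanot–Jacobi
identity relates `det T` and its minors obtained by deleting rows `{0}`, `{1}`, `{0, 1}` and
columns `{0}`, `{last}`, `{0, last}`. Deleting the last column of `T` leaves a submatrix of the
generic matrix, so three of these minors are minors of `A`, which are nonzero since they
specialize to an identity matrix. The hypothesis at `k = i` and `k = j` expresses `det T` and
`det T` with row and column `0` deleted through them, and solving the identity for the remaining
minor of `A'` gives the formula.
-/

open Matrix Finset

namespace Matrix

variable {ι R : Type*} [Fintype ι] [DecidableEq ι] [CommRing R]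

theorem mulVec_adjugate_col (M : Matrix ι ι R) (c : ι) :
    M *ᵥ (fun k => M.adjugate k c) = Pi.single c M.det := by
  ext r
  simpa [mulVec, dotProduct, mul_apply, one_apply, Pi.single_apply, eq_comm] using
    congrFun (congrFun M.mul_adjugate r) c

theorem desnanot_jacobi {K : Type*} [Field K] {m : ℕ} (M : Matrix (Fin (m + 2)) (Fin (m + 2)) K)
    (h : (M.submatrix Fin.succ Fin.castSucc).det ≠ 0) :
    M.det * ((M.submatrix Fin.succ Fin.castSucc).submatrix Fin.succ Fin.succ).det =
      (M.submatrix Fin.succ Fin.succ).det * (M.submatrix (Fin.succAbove 1) Fin.castSucc).det -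
        (M.submatrix Fin.succ Fin.castSucc).det * (M.submatrix (Fin.succAbove 1) Fin.succ).det := by
  set N := M.submatrix Fin.succ Fin.castSucc
  set L := Fin.last (m + 1)
  set u : Fin (m + 2) → K := fun k => M.adjugate k 0
  set w : Fin (m + 2) → K := fun k => M.adjugate k 1
  -- `x` is a combination of two columns of `adj M` with last entry `0`, so `N` sends it to a
  -- multiple of the first basis vector and Cramer's rule for `N` computes `x 0`.
  set x := w L • u - u L • w
  have hxL : x L = 0 := by simp only [x, Pi.sub_apply, Pi.smul_apply, smul_eq_mul]; ring
  have hMx : M *ᵥ x = w L • Pi.single 0 M.det - u L • Pi.single 1 M.det := by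
    simp only [x, mulVec_sub, mulVec_smul, u, w, mulVec_adjugate_col]
  have hNx : N *ᵥ (x ∘ Fin.castSucc) = Pi.single 0 (-(u L * M.det)) := by
    ext r
    have hrow : (N *ᵥ (x ∘ Fin.castSucc)) r = (M *ᵥ x) r.succ := by
      simp only [mulVec, dotProduct]
      rw [Fin.sum_univ_castSucc (fun c => M r.succ c * x c), hxL, mul_zero, add_zero]
      rfl
    rw [hrow, hMx]
    rcases Fin.eq_zero_or_eq_succ r with rfl | ⟨r, rfl⟩ <;>
      simp [Fin.ext_iff]
  have hcramer : N.det * x 0 = N.adjugate 0 0 * -(u L * M.det) := by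
    have := congrFun (congrArg (N.adjugate *ᵥ ·) hNx) 0
    simp only [mulVec_mulVec, adjugate_mul, smul_mulVec, one_mulVec, mulVec_single] at this
    simpa using this
  have hu0 : u 0 = (M.submatrix Fin.succ Fin.succ).det := by
    simp [u, adjugate_fin_succ_eq_det_submatrix]
  have huL : u L = (-1) ^ (m + 1) * N.det := by
    simp [u, L, N, adjugate_fin_succ_eq_det_submatrix]
  have hw0 : w 0 = -(M.submatrix (Fin.succAbove 1) Fin.succ).det := by
    simp [w, adjugate_fin_succ_eq_det_submatrix]
  have hwL : w L = (-1) ^ m * (M.submatrix (Fin.succAbove 1) Fin.castSucc).det := by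
    simp [w, L, adjugate_fin_succ_eq_det_submatrix, add_comm 1, pow_succ]
  have hN00 : N.adjugate 0 0 = (N.submatrix Fin.succ Fin.succ).det := by
    simp [adjugate_fin_succ_eq_det_submatrix]
  simp only [x, Pi.sub_apply, Pi.smul_apply, smul_eq_mul, hu0, huL, hw0, hwL, hN00] at hcramer
  refine mul_left_cancel₀ (mul_ne_zero (pow_ne_zero m (neg_ne_zero.mpr one_ne_zero)) h) ?_
  linear_combination (-1 : K) * hcramer

end Matrix

theorem minorDet_eq_det_submatrix {K : Type*} [CommRing K] {n d : ℕ}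
    (M : Matrix (Fin n) (Fin n) K) {R C : Finset (Fin n)} {f g : Fin d → Fin n}
    (hR : #R = d) (hC : #C = d) (hf : StrictMono f) (hg : StrictMono g)
    (hfR : ∀ k, f k ∈ R) (hgC : ∀ k, g k ∈ C) :
    minorDet M R C = (M.submatrix f g).det := by
  subst hR
  rw [minorDet, dif_pos hC.symm, ← orderEmbOfFin_unique rfl hfR hf,
    ← orderEmbOfFin_unique hC hgC hg]

theorem genMat_ne_zero (n : ℕ) (a b : Fin n) : genMat n a b ≠ 0 :=
  (map_ne_zero_iff _ (IsFractionRing.injective _ _)).mpr (MvPolynomial.X_ne_zero _)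

theorem det_submatrix_genMat_ne_zero {n : ℕ} {ι : Type*} [Fintype ι] [DecidableEq ι]
    {f g : ι → Fin n} (hf : Function.Injective f) (hg : Function.Injective g) :
    ((genMat n).submatrix f g).det ≠ 0 := by
  classical
  let P : Matrix ι ι (MvPolynomial (Fin n × Fin n) ℚ) := fun r c => MvPolynomial.X (f r, g c)
  -- sending `X (f r, g r)` to `1` and every other variable to `0` specializes `P` to `1`
  let ev := MvPolynomial.eval fun p : Fin n × Fin n =>
    if ∃ r, f r = p.1 ∧ g r = p.2 then (1 : ℚ) else 0
  have hP : (genMat n).submatrix f g = (algebraMap _ (GenField n)).mapMatrix P := rfl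
  have hev : ev.mapMatrix P = 1 := by
    ext r c
    show ev (MvPolynomial.X (f r, g c)) = _
    simp [ev, one_apply, hf.eq_iff, hg.eq_iff]
  rw [hP, ← RingHom.map_det, map_ne_zero_iff _ (IsFractionRing.injective _ _)]
  intro h0
  have h1 := congrArg ev h0
  rw [map_zero, RingHom.map_det, hev, det_one] at h1
  exact one_ne_zero h1

theorem minorDet_genMat_ne_zero {n : ℕ} {R C : Finset (Fin n)} (h : #R = #C) :
    minorDet (genMat n) R C ≠ 0 := by
  rw [minorDet, dif_pos h]
  exact det_submatrix_genMat_ne_zero (R.orderEmbOfFin rfl).injective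
    (C.orderEmbOfFin h.symm).injective

theorem card_insert_Ioi {n : ℕ} {i j : Fin n} (hij : i < j) :
    #(insert i (Ioi j)) = n - 1 - j + 1 := by
  rw [card_insert_of_notMem (by simpa using hij.le), Fin.card_Ioi]

section Tail

variable {n m : ℕ} (i : Fin n) (hm : (i : ℕ) + m + 2 = n)

def tailEmb : Fin (m + 2) → Fin n := fun k => ⟨i + k, by omega⟩

@[simp] theorem val_tailEmb (k : Fin (m + 2)) : (tailEmb i hm k : ℕ) = i + k := rfl

theorem strictMono_tailEmb : StrictMono (tailEmb i hm) := fun a b h => by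
  rw [Fin.lt_def] at h ⊢
  simp only [val_tailEmb]
  omega

theorem val_one_succAbove_ne_one (k : Fin (m + 1)) :
    ((1 : Fin (m + 2)).succAbove k : ℕ) ≠ 1 := by
  simpa [Fin.ext_iff] using Fin.succAbove_ne 1 k

variable {i}

theorem submatrix_tailEmb_castSucc_eq {K : Type*} {A B : Matrix (Fin n) (Fin n) K}
    (h : ∀ a b : Fin n, (b : ℕ) ≠ n - 1 → A a b = B a b) {d : ℕ}
    (r : Fin d → Fin (m + 2)) :
    (A.submatrix (tailEmb i hm) (tailEmb i hm)).submatrix r Fin.castSucc =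
      (B.submatrix (tailEmb i hm) (tailEmb i hm)).submatrix r Fin.castSucc := by
  ext a b
  exact h _ _ (by simp; omega)

variable {K : Type*} [CommRing K] (M : Matrix (Fin n) (Fin n) K)

theorem minorDet_Ici_Ici_eq :
    minorDet M (Ici i) (Ici i) = (M.submatrix (tailEmb i hm) (tailEmb i hm)).det := by
  refine minorDet_eq_det_submatrix M ?_ ?_ (strictMono_tailEmb i hm) (strictMono_tailEmb i hm)
    ?_ ?_ <;> simp [Fin.le_def] <;> omega

theorem minorDet_Ici_Ici_succ_eq {j : Fin n} (hij : (i : ℕ) + 1 = j) :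
    minorDet M (Ici j) (Ici j) =
      ((M.submatrix (tailEmb i hm) (tailEmb i hm)).submatrix Fin.succ Fin.succ).det := by
  rw [submatrix_submatrix]
  refine minorDet_eq_det_submatrix M ?_ ?_ ((strictMono_tailEmb i hm).comp Fin.strictMono_succ)
    ((strictMono_tailEmb i hm).comp Fin.strictMono_succ) ?_ ?_ <;> simp [Fin.le_def] <;> omega

theorem minorDet_insert_Ioi_Ici_eq {j : Fin n} (hij : (i : ℕ) + 1 = j) :
    minorDet M (insert i (Ioi j)) (Ici j) =
      ((M.submatrix (tailEmb i hm) (tailEmb i hm)).submatrix (Fin.succAbove 1) Fin.succ).det := by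
  rw [submatrix_submatrix]
  refine minorDet_eq_det_submatrix M
    (by rw [card_insert_Ioi (Fin.lt_def.mpr (by omega))]; omega) ?_
    ((strictMono_tailEmb i hm).comp (Fin.strictMono_succAbove 1))
    ((strictMono_tailEmb i hm).comp Fin.strictMono_succ) (fun k => ?_) ?_
  · simp; omega
  · have := val_one_succAbove_ne_one k
    rw [Function.comp_apply, mem_insert, mem_Ioi, Fin.ext_iff, Fin.lt_def, val_tailEmb]
    omega
  · simp [Fin.le_def]; omega

theorem minorDet_Ioi_Ico_eq :
    minorDet M (Ioi i) (Ico i ⟨n - 1, by omega⟩) =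
      ((M.submatrix (tailEmb i hm) (tailEmb i hm)).submatrix Fin.succ Fin.castSucc).det := by
  rw [submatrix_submatrix]
  refine minorDet_eq_det_submatrix M ?_ ?_ ((strictMono_tailEmb i hm).comp Fin.strictMono_succ)
    ((strictMono_tailEmb i hm).comp Fin.strictMono_castSucc) ?_ ?_ <;>
    simp [Fin.le_def, Fin.lt_def] <;> omega

theorem minorDet_insert_Ioi_Ico_eq {j : Fin n} (hij : (i : ℕ) + 1 = j) :
    minorDet M (insert i (Ioi j)) (Ico i ⟨n - 1, by omega⟩) =
      ((M.submatrix (tailEmb i hm) (tailEmb i hm)).submatrix (Fin.succAbove 1)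
        Fin.castSucc).det := by
  rw [submatrix_submatrix]
  refine minorDet_eq_det_submatrix M
    (by rw [card_insert_Ioi (Fin.lt_def.mpr (by omega))]; omega) ?_
    ((strictMono_tailEmb i hm).comp (Fin.strictMono_succAbove 1))
    ((strictMono_tailEmb i hm).comp Fin.strictMono_castSucc) (fun k => ?_) ?_
  · simp; omega
  · have := val_one_succAbove_ne_one k
    rw [Function.comp_apply, mem_insert, mem_Ioi, Fin.ext_iff, Fin.lt_def, val_tailEmb]
    omega
  · simp [Fin.le_def, Fin.lt_def]; omega

theorem minorDet_Ioi_Ico_succ_eq {j : Fin n} (hij : (i : ℕ) + 1 = j) :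
    minorDet M (Ioi j) (Ico j ⟨n - 1, by omega⟩) =
      (((M.submatrix (tailEmb i hm) (tailEmb i hm)).submatrix Fin.succ Fin.castSucc).submatrix
        Fin.succ Fin.succ).det := by
  rw [submatrix_submatrix, submatrix_submatrix]
  refine minorDet_eq_det_submatrix M ?_ ?_
    (((strictMono_tailEmb i hm).comp Fin.strictMono_succ).comp Fin.strictMono_succ)
    (((strictMono_tailEmb i hm).comp Fin.strictMono_castSucc).comp Fin.strictMono_succ) ?_ ?_ <;>
    simp [Fin.le_def, Fin.lt_def] <;> omega

end Tail

/-- Lemma on replacing the last column.  Let `A` be the generic `n × n`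
matrix (`n ≥ 2`), and `A′` be `A` with last column replaced by `(ã_1,…,ã_n)ᵗ`, so that
`det(A′; {k,…,n}, {k,…,n}) = (−1)^{n−k} a_{k,n} det(A; {k+1,…,n}, {k,…,n−1})` for all
`k`.  Then for each `1 ≤ i ≤ n−1` (0-based: `(i:ℕ)+1 = (j:ℕ)`), all the indicated
denominators are nonzero, and
`det(A′; {i}∪{i+2,…,n},{i+1,…,n})/det(A′; {i+1,…,n},{i+1,…,n})
  = a_{i,n}/a_{i+1,n} + det(A; {i}∪{i+2,…,n},{i,…,n−1})/det(A; {i+1,…,n},{i,…,n−1})`. -/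
theorem superdiagonal_shift_of_last_column_replacement (n : ℕ) (hn : 2 ≤ n)
    (atil : Fin n → GenField n)
    (A' : Matrix (Fin n) (Fin n) (GenField n))
    (hA' : ∀ i j : Fin n, A' i j =
      if (j : ℕ) = n - 1 then atil i else genMat n i j)
    (hyp : ∀ k : Fin n,
      minorDet A' (Finset.Ici k) (Finset.Ici k) =
        (-1 : GenField n) ^ (n - 1 - (k : ℕ)) * genMat n k ⟨n - 1, by omega⟩ *
          minorDet (genMat n) (Finset.Ioi k) (Finset.Ico k ⟨n - 1, by omega⟩)) :
    ∀ i j : Fin n, (i : ℕ) + 1 = (j : ℕ) →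
      (minorDet A' (Finset.Ici j) (Finset.Ici j) ≠ 0 ∧
        genMat n j ⟨n - 1, by omega⟩ ≠ 0 ∧
        minorDet (genMat n) (Finset.Ioi i) (Finset.Ico i ⟨n - 1, by omega⟩) ≠ 0) ∧
      minorDet A' (insert i (Finset.Ioi j)) (Finset.Ici j) /
          minorDet A' (Finset.Ici j) (Finset.Ici j) =
        genMat n i ⟨n - 1, by omega⟩ / genMat n j ⟨n - 1, by omega⟩ +
          minorDet (genMat n) (insert i (Finset.Ioi j)) (Finset.Ico i ⟨n - 1, by omega⟩) /
            minorDet (genMat n) (Finset.Ioi i) (Finset.Ico i ⟨n - 1, by omega⟩) := by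
  intro i j hij
  obtain ⟨m, hm⟩ : ∃ m, (i : ℕ) + m + 2 = n := ⟨n - 2 - i, by omega⟩
  set T := A'.submatrix (tailEmb i hm) (tailEmb i hm)
  have hgen : ∀ {d} (r : Fin d → Fin (m + 2)),
      ((genMat n).submatrix (tailEmb i hm) (tailEmb i hm)).submatrix r Fin.castSucc =
        T.submatrix r Fin.castSucc :=
    submatrix_tailEmb_castSucc_eq hm fun a b hb => by rw [hA', if_neg hb]
  have hN := minorDet_Ioi_Ico_eq hm (genMat n)
  have hP := minorDet_insert_Ioi_Ico_eq hm (genMat n) hij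
  have hC := minorDet_Ioi_Ico_succ_eq hm (genMat n) hij
  have hN0 := minorDet_genMat_ne_zero (R := Ioi i) (C := Ico i ⟨n - 1, by omega⟩) (by simp)
  have hC0 := minorDet_genMat_ne_zero (R := Ioi j) (C := Ico j ⟨n - 1, by omega⟩) (by simp)
  rw [hgen] at hN hP hC
  rw [hN] at hN0
  rw [hC] at hC0
  have hTi := hyp i
  rw [minorDet_Ici_Ici_eq hm, show n - 1 - (i : ℕ) = m + 1 by omega, hN] at hTi
  have hTj := hyp j
  rw [minorDet_Ici_Ici_succ_eq hm A' hij, show n - 1 - (j : ℕ) = m by omega, hC] at hTj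
  have hDJ := T.desnanot_jacobi hN0
  rw [hTi, hTj] at hDJ
  rw [minorDet_Ici_Ici_succ_eq hm A' hij, minorDet_insert_Ioi_Ici_eq hm A' hij, hN, hP,
    hTj]
  have ha := genMat_ne_zero n j ⟨n - 1, by omega⟩
  have hsign : (-1 : GenField n) ^ m ≠ 0 := pow_ne_zero _ (neg_ne_zero.2 one_ne_zero)
  refine ⟨⟨mul_ne_zero (mul_ne_zero hsign ha) hC0, ha, hN0⟩, ?_⟩
  field_simp
  linear_combination hDJ
end

section
/- With the notation of the context, ∑_{j=1}^{n−1} s_j = ∑_{j=1}^{n−1} z_j, where s_j := (−1)^{1+(n−j)(n−j+1)/2} · c_j · E_j / (∏_{m=j}^{n−1} c_{m,m}). -/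
/-- Index type for the indeterminates `c_{i,j}` (`j ≤ i`) and `z_1,…,z_{n-1}`. -/
abbrev CZIndex (n : ℕ) : Type :=
  {p : Fin (n - 1) × Fin (n - 1) // p.2 ≤ p.1} ⊕ Fin (n - 1)

/-- The field of fractions of the polynomial ring over `ℚ` in the indeterminates
`c_{i,j}` (for `j ≤ i`, indices in `Fin (n-1)`) and `z_1, …, z_{n-1}`. -/
abbrev CZField (n : ℕ) : Type := FractionRing (MvPolynomial (CZIndex n) ℚ)

/-- The indeterminate `c_{i,j}` for `j ≤ i`, and `0` for `j > i`. -/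
noncomputable def cvar (n : ℕ) (i j : Fin (n - 1)) : CZField n :=
  if h : j ≤ i then
    algebraMap (MvPolynomial (CZIndex n) ℚ) (CZField n)
      (MvPolynomial.X (Sum.inl ⟨(i, j), h⟩))
  else 0

/-- The indeterminate `z_j`. -/
noncomputable def zvar (n : ℕ) (j : Fin (n - 1)) : CZField n :=
  algebraMap (MvPolynomial (CZIndex n) ℚ) (CZField n) (MvPolynomial.X (Sum.inr j))

/-- `c_j = ∑_{m ≤ j} c_{j,m}`. -/
noncomputable def csum (n : ℕ) (j : Fin (n - 1)) : CZField n :=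
  ∑ m ∈ Finset.Iic j, cvar n j m

/-- The `(n−j)×(n−j)` matrix `M_j` (here `j` is 0-based: 1-based `j+1`, size
`n - 1 - j`): rows indexed by `i ∈ {j+1,…,n-2}` (0-based) followed by one final row;
columns indexed by `ℓ ∈ {n-2, n-3, …, j}` in decreasing order; entry `c_{i,ℓ}` if
`ℓ ≤ i` and `0` if `ℓ > i`, final row entries `z_ℓ`. -/
noncomputable def Mj (n : ℕ) (j : ℕ) (hj : j < n - 1) :
    Matrix (Fin (n - 1 - j)) (Fin (n - 1 - j)) (CZField n) :=
  fun r c =>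
    if hr : (r : ℕ) < n - 1 - j - 1 then
      cvar n ⟨j + 1 + (r : ℕ), by omega⟩ ⟨n - 2 - (c : ℕ), by omega⟩
    else
      zvar n ⟨n - 2 - (c : ℕ), by omega⟩

/-- `E_j = det M_j`. -/
noncomputable def Ej (n : ℕ) (j : ℕ) (hj : j < n - 1) : CZField n := (Mj n j hj).det

/-!
Let `A` be the upper triangular matrix with `A m k = c_{k,m}`; its column sums are the `c_k`.
If `A x = z`, then `∑ c_k x_k = 1ᵀ A x = ∑ z_m`, so it suffices to show `s_j = c_j x_j`.
Because `A` is triangular, the tail `(x_j, …)` of `x` solves the corner system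
`A[j.., j..] y = z[j..]`, whose determinant is `∏_{m ≥ j} c_{m,m}`. By Cramer's rule, `x_j`
times this product is the determinant of the corner with its first column replaced by `z`.
Up to transposition, a cyclic shift of the rows and a reversal of the columns, that matrix is
`M_j`, and the signs of these two permutations cancel the sign in `s_j`.
-/

open Finset Matrix Equiv

def Fin.addFrom {k : ℕ} (j : Fin k) (r : Fin (k - j)) : Fin k := ⟨j + r, by omega⟩

@[to_additive]
theorem Fin.prod_Ici_eq_prod_addFrom {M : Type*} [CommMonoid M] {k : ℕ} (j : Fin k)
    (f : Fin k → M) : ∏ i ∈ Ici j, f i = ∏ r : Fin (k - j), f (j.addFrom r) := by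
  refine (prod_nbij' j.addFrom (fun i => ⟨i - j, by omega⟩) (fun r _ => ?_)
    (fun i _ => mem_univ _) (fun r _ => ?_) (fun i hi => ?_) fun _ _ => rfl).symm
  · exact mem_Ici.mpr (Fin.le_def.mpr (Nat.le_add_right _ _))
  · ext
    simp [Fin.addFrom]
  · have := Fin.le_def.mp (mem_Ici.mp hi)
    ext
    simp only [Fin.addFrom]
    omega

theorem Fin.sign_revPerm (N : ℕ) :
    Perm.sign (Fin.revPerm : Perm (Fin N)) = (-1) ^ (N * (N - 1) / 2) := by
  induction N with
  | zero => rfl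
  | succ N ih =>
    have hdecomp : (Fin.revPerm : Perm (Fin (N + 1)))
        = Perm.decomposeFin.symm (0, Fin.revPerm) * finRotate (N + 1) := by
      ext x
      refine Fin.lastCases ?_ (fun i => ?_) x
      · simp [Perm.decomposeFin_symm_apply_zero]
      · rw [Perm.coe_mul, Function.comp_apply, finRotate_apply, Fin.coeSucc_eq_succ,
          Perm.decomposeFin_symm_apply_succ]
        simp only [revPerm_apply, val_rev, val_castSucc, Nat.reduceSubDiff, swap_self,
          refl_apply, val_succ]
        omega
    have htri : (N + 1) * N / 2 = N * (N - 1) / 2 + N := by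
      rcases N with _ | N
      · rfl
      · rw [show (N + 1 + 1) * (N + 1) = (N + 1) * N + 2 * (N + 1) by ring,
          Nat.add_mul_div_left _ _ two_pos, Nat.add_sub_cancel]
    rw [hdecomp, map_mul, Perm.decomposeFin.symm_sign, sign_finRotate, ih, if_pos rfl,
      one_mul, ← pow_add, Nat.add_sub_cancel, htri]

theorem Fin.val_finRotate {N : ℕ} (r : Fin N) :
    (finRotate N r : ℕ) = if (r : ℕ) + 1 = N then 0 else (r : ℕ) + 1 := by
  obtain ⟨N, rfl⟩ := Nat.exists_eq_succ_of_ne_zero r.pos.ne'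
  rw [coe_finRotate]
  simp [Fin.ext_iff]

theorem Matrix.det_smul_eq_cramer_of_mulVec_eq {ι R : Type*} [Fintype ι] [DecidableEq ι]
    [CommRing R] {A : Matrix ι ι R} {x b : ι → R} (h : A *ᵥ x = b) :
    A.det • x = A.cramer b := by
  rw [cramer_eq_adjugate_mulVec, ← h, mulVec_mulVec, adjugate_mul, smul_mulVec, one_mulVec]

theorem Matrix.IsUpperTriangular.submatrix_addFrom_mulVec {R : Type*} [CommSemiring R] {k : ℕ}
    {A : Matrix (Fin k) (Fin k) R} (hA : A.IsUpperTriangular) (j : Fin k) (x : Fin k → R) :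
    A.submatrix j.addFrom j.addFrom *ᵥ (x ∘ j.addFrom) = (A *ᵥ x) ∘ j.addFrom := by
  ext r
  simp only [mulVec, dotProduct, submatrix_apply, Function.comp_apply]
  rw [← Fin.sum_Ici_eq_sum_addFrom j fun i => A (j.addFrom r) i * x i,
    ← sum_subset (subset_univ _)]
  intro i _ hi
  have hij : i < j.addFrom r := by
    rw [mem_Ici, not_le] at hi
    exact hi.trans_le (Fin.le_def.mpr (Nat.le_add_right _ _))
  exact mul_eq_zero_of_left (hA hij) _

noncomputable def coeffMatrix (n : ℕ) : Matrix (Fin (n - 1)) (Fin (n - 1)) (CZField n) :=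
  of fun m k => cvar n k m

theorem cvar_self_ne_zero (n : ℕ) (i : Fin (n - 1)) : cvar n i i ≠ 0 := by
  rw [cvar, dif_pos le_rfl, Ne, IsFractionRing.to_map_eq_zero_iff]
  exact MvPolynomial.X_ne_zero _

theorem coeffMatrix_isUpperTriangular (n : ℕ) : (coeffMatrix n).IsUpperTriangular :=
  fun _ _ hkm => dif_neg (not_le.mpr hkm)

theorem det_coeffMatrix_ne_zero (n : ℕ) : (coeffMatrix n).det ≠ 0 := by
  rw [det_of_isUpperTriangular (coeffMatrix_isUpperTriangular n)]
  exact prod_ne_zero_iff.mpr fun i _ => cvar_self_ne_zero n i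

theorem one_vecMul_coeffMatrix (n : ℕ) : 1 ᵥ* coeffMatrix n = csum n := by
  ext k
  simp only [vecMul, dotProduct, Pi.one_apply, one_mul, coeffMatrix, of_apply, csum]
  exact (sum_subset (subset_univ _) fun m _ hm => dif_neg (by simpa using hm)).symm

theorem Ej_eq_neg_one_pow_mul_det (n : ℕ) (j : Fin (n - 1)) :
    Ej n j j.isLt = (-1) ^ (n - 1 - j - 1 + (n - 1 - j) * (n - 1 - j - 1) / 2) *
      (((coeffMatrix n).submatrix j.addFrom j.addFrom).updateCol ⟨0, by omega⟩
        (zvar n ∘ j.addFrom)).det := by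
  -- `M_j` lists the rows of the transposed tail Cramer matrix with the `z` row moved last,
  -- and its columns in reverse order.
  have hMj : Mj n j j.isLt = ((((coeffMatrix n).submatrix j.addFrom j.addFrom).updateCol
      ⟨0, by omega⟩ (zvar n ∘ j.addFrom))ᵀ.submatrix id Fin.revPerm).submatrix
        (finRotate _) id := by
    ext r c
    simp only [Mj, submatrix_apply, transpose_apply, id, updateCol_apply, coeffMatrix, of_apply,
      Function.comp_apply, Fin.revPerm_apply]
    by_cases hr : (r : ℕ) < n - 1 - j - 1
    · have hrot : (finRotate _ r : ℕ) = r + 1 := by rw [Fin.val_finRotate, if_neg (by omega)]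
      rw [dif_pos hr, if_neg (by rw [Fin.ext_iff, hrot]; exact Nat.succ_ne_zero _)]
      congr 1 <;> ext <;> simp only [Fin.addFrom, hrot, Fin.val_rev] <;> omega
    · have hrot : (finRotate _ r : ℕ) = 0 := by rw [Fin.val_finRotate, if_pos (by omega)]
      rw [dif_neg hr, if_pos (Fin.ext hrot)]
      congr 1
      ext
      simp only [Fin.addFrom, Fin.val_rev]
      omega
  rw [Ej, hMj, det_permute, det_permute', det_transpose, sign_finRotate, Fin.sign_revPerm]
  push_cast
  ring

theorem neg_one_pow_mul_Ej_div_eq_of_mulVec_eq {n : ℕ} {x : Fin (n - 1) → CZField n}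
    (hx : coeffMatrix n *ᵥ x = zvar n) (j : Fin (n - 1)) :
    (-1 : CZField n) ^ (1 + (n - 1 - (j : ℕ)) * (n - (j : ℕ)) / 2) * Ej n j j.isLt /
      ∏ m ∈ Ici j, cvar n m m = x j := by
  set A := (coeffMatrix n).submatrix j.addFrom j.addFrom
  have hA : A.IsUpperTriangular := fun r s (hrs : s < r) =>
    coeffMatrix_isUpperTriangular n (Fin.lt_def.mpr (Nat.add_lt_add_left hrs _))
  have hsys : A *ᵥ (x ∘ j.addFrom) = zvar n ∘ j.addFrom := by
    rw [(coeffMatrix_isUpperTriangular n).submatrix_addFrom_mulVec, hx]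
  have hdet : A.det = ∏ m ∈ Ici j, cvar n m m := by
    rw [det_of_isUpperTriangular hA, Fin.prod_Ici_eq_prod_addFrom]
    rfl
  have hcramer : A.det * x j = (A.updateCol ⟨0, by omega⟩ (zvar n ∘ j.addFrom)).det :=
    congrFun (det_smul_eq_cramer_of_mulVec_eq hsys) ⟨0, by omega⟩
  have hsign : (-1 : CZField n) ^ (1 + (n - 1 - (j : ℕ)) * (n - (j : ℕ)) / 2) *
      (-1) ^ (n - 1 - j - 1 + (n - 1 - j) * (n - 1 - j - 1) / 2) = 1 := by
    rw [← pow_add]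
    apply Even.neg_one_pow
    obtain ⟨N, hN⟩ : ∃ N, n - 1 - (j : ℕ) = N + 1 := ⟨n - 1 - j - 1, by omega⟩
    rw [show n - (j : ℕ) = N + 2 by omega, hN, Nat.add_sub_cancel,
      show (N + 1) * (N + 2) = (N + 1) * N + 2 * (N + 1) by ring]
    obtain ⟨T, hT⟩ := Nat.even_mul_succ_self N
    rw [mul_comm, hT]
    exact ⟨T + N + 1, by omega⟩
  rw [Ej_eq_neg_one_pow_mul_det, ← hcramer, hdet, ← mul_assoc, hsign, one_mul,
    mul_div_cancel_left₀ _ (prod_ne_zero_iff.mpr fun m _ => cvar_self_ne_zero n m)]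

theorem sum_sj_eq_sum_z_general (n : ℕ) :
    ∑ j : Fin (n - 1),
      (-1 : CZField n) ^ (1 + (n - 1 - (j : ℕ)) * (n - (j : ℕ)) / 2) *
        csum n j * Ej n (j : ℕ) j.isLt /
        ∏ m ∈ Finset.Ici j, cvar n m m
      = ∑ j : Fin (n - 1), zvar n j := by
  set x := (coeffMatrix n)⁻¹ *ᵥ zvar n
  have hx : coeffMatrix n *ᵥ x = zvar n := by
    rw [mulVec_mulVec, mul_nonsing_inv _ (det_coeffMatrix_ne_zero n).isUnit, one_mulVec]
  calc _ = ∑ j, csum n j * x j := sum_congr rfl fun j _ => by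
          rw [← neg_one_pow_mul_Ej_div_eq_of_mulVec_eq hx j]
          ring
    _ = (1 ᵥ* coeffMatrix n) ⬝ᵥ x := by rw [one_vecMul_coeffMatrix]; rfl
    _ = 1 ⬝ᵥ zvar n := by rw [← dotProduct_mulVec, hx]
    _ = ∑ j, zvar n j := one_dotProduct _

/-- `∑_{j=1}^{n−1} s_j = ∑_{j=1}^{n−1} z_j`, where
`s_j = (−1)^{1+(n−j)(n−j+1)/2} · c_j · E_j / ∏_{m=j}^{n−1} c_{m,m}`
(here the index `j` of the sum is 0-based, corresponding to the 1-based `j+1`). -/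
theorem sum_sj_eq_sum_z (n : ℕ) (hn : 2 ≤ n) :
    ∑ j : Fin (n - 1),
      (-1 : CZField n) ^ (1 + (n - 1 - (j : ℕ)) * (n - (j : ℕ)) / 2) *
        csum n j * Ej n (j : ℕ) j.isLt /
        ∏ m ∈ Finset.Ici j, cvar n m m
      = ∑ j : Fin (n - 1), zvar n j :=
  sum_sj_eq_sum_z_general n
end

section
/- For every s ∈ ℂ with 0 < Re s < 1, the limit as T → ∞ of ∫_{−T}^{T} e^{2πix} |x|^{s−1} dx exists and equals 2 · (2π)^{−s} · Γ(s) · cos(πs/2). -/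
open Filter

/-!
For `Re c < 0`, `∫₀^∞ e^{cx} x^{s-1} dx = (-c)^{-s} Γ(s)`: for real `c` this is the Gamma integral
after the substitution `x ↦ x / |c|`, and both sides are holomorphic in `c`. For `Re c ≤ 0`,
`c ≠ 0` and `0 < Re s < 1`, one integration by parts on `[1, T]` shows that `∫₀^T e^{cx} x^{s-1} dx`
converges as `T → ∞`, to an expression continuous in `c` on the closed half-plane minus `0`; so the
formula persists on the imaginary axis. Splitting `[-T, T]` at `0` and using `c = ±2πi`,
`(2πi)^{-s} + (-2πi)^{-s} = 2 (2π)^{-s} cos(πs/2)`.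
-/

open MeasureTheory Set Complex Topology
open scoped Real

section
variable {a c s : ℂ} {x : ℝ}

lemma norm_cexp_mul_cpow (hx : 0 < x) :
    ‖cexp (c * x) * (x : ℂ) ^ a‖ = Real.exp (c.re * x) * x ^ a.re := by
  rw [norm_mul, norm_exp, norm_cpow_eq_rpow_re_of_pos hx, re_mul_ofReal]

lemma norm_cexp_mul_cpow_le (hc : c.re ≤ 0) (hx : 0 < x) :
    ‖cexp (c * x) * (x : ℂ) ^ a‖ ≤ x ^ a.re := by
  rw [norm_cexp_mul_cpow hx]
  exact mul_le_of_le_one_left (Real.rpow_nonneg hx.le _)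
    (Real.exp_le_one_iff.2 (mul_nonpos_of_nonpos_of_nonneg hc hx.le))

lemma continuousOn_cexp_mul_cpow (c a : ℂ) :
    ContinuousOn (fun x : ℝ ↦ cexp (c * x) * (x : ℂ) ^ a) (Ioi 0) := fun x hx ↦
  ((continuous_exp.comp (continuous_const.mul continuous_ofReal)).continuousAt.mul
    (continuousAt_ofReal_cpow_const x a (Or.inr hx.ne'))).continuousWithinAt

lemma aestronglyMeasurable_cexp_mul_cpow (c a : ℂ) {s : Set ℝ} (hs : MeasurableSet s)
    (hs0 : s ⊆ Ioi 0) :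
    AEStronglyMeasurable (fun x : ℝ ↦ cexp (c * x) * (x : ℂ) ^ a) (volume.restrict s) :=
  ((continuousOn_cexp_mul_cpow c a).mono hs0).aestronglyMeasurable hs

lemma intervalIntegrable_cexp_mul_cpow (ha : -1 < a.re) (hc : c.re ≤ 0) {T : ℝ} (hT : 0 ≤ T) :
    IntervalIntegrable (fun x : ℝ ↦ cexp (c * x) * (x : ℂ) ^ a) volume 0 T := by
  rw [intervalIntegrable_iff_integrableOn_Ioc_of_le hT]
  refine ((intervalIntegral.intervalIntegrable_rpow' ha).1).mono'
    (aestronglyMeasurable_cexp_mul_cpow c a measurableSet_Ioc Ioc_subset_Ioi_self) ?_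
  filter_upwards [ae_restrict_mem measurableSet_Ioc] with x hx
  exact norm_cexp_mul_cpow_le hc hx.1

lemma integrableOn_Ioi_one_cexp_mul_cpow (ha : a.re < -1) (hc : c.re ≤ 0) :
    IntegrableOn (fun x : ℝ ↦ cexp (c * x) * (x : ℂ) ^ a) (Ioi 1) := by
  refine (integrableOn_Ioi_rpow_of_lt ha one_pos).mono'
    (aestronglyMeasurable_cexp_mul_cpow c a measurableSet_Ioi (Ioi_subset_Ioi zero_le_one)) ?_
  filter_upwards [ae_restrict_mem measurableSet_Ioi] with x hx
  exact norm_cexp_mul_cpow_le hc (zero_lt_one.trans hx)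

lemma integrableOn_Ioi_zero_cexp_mul_cpow (ha : -1 < a.re) (hc : c.re < 0) :
    IntegrableOn (fun x : ℝ ↦ cexp (c * x) * (x : ℂ) ^ a) (Ioi 0) := by
  refine (integrableOn_rpow_mul_exp_neg_mul_rpow ha one_pos (neg_pos.2 hc)).mono'
    (aestronglyMeasurable_cexp_mul_cpow c a measurableSet_Ioi subset_rfl) ?_
  filter_upwards [ae_restrict_mem measurableSet_Ioi] with x hx
  rw [norm_cexp_mul_cpow hx, Real.rpow_one, neg_neg, mul_comm]

lemma differentiableOn_integral_Ioi_cexp_mul_cpow (ha : -1 < a.re) :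
    DifferentiableOn ℂ (fun c : ℂ ↦ ∫ x in Ioi (0 : ℝ), cexp (c * x) * (x : ℂ) ^ a)
      {c | c.re < 0} := by
  intro c₀ (hc₀ : c₀.re < 0)
  have hδ : 0 < -c₀.re / 2 := by linarith
  have hball : ∀ c ∈ Metric.ball c₀ (-c₀.re / 2), c.re ≤ c₀.re / 2 := fun c hc ↦ by
    have := (abs_le.1 ((abs_re_le_norm (c - c₀)).trans (mem_ball_iff_norm.1 hc).le)).2
    rw [sub_re] at this
    linarith
  refine (hasDerivAt_integral_of_dominated_loc_of_deriv_le (μ := volume.restrict (Ioi (0 : ℝ)))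
    (F := fun c (x : ℝ) ↦ cexp (c * x) * (x : ℂ) ^ a)
    (F' := fun c (x : ℝ) ↦ (x : ℂ) * (cexp (c * x) * (x : ℂ) ^ a))
    (bound := fun x : ℝ ↦ ‖cexp ((c₀.re / 2 : ℝ) * x) * (x : ℂ) ^ (a + 1)‖)
    (Metric.ball_mem_nhds c₀ hδ)
    (Eventually.of_forall fun c ↦
      aestronglyMeasurable_cexp_mul_cpow c a measurableSet_Ioi subset_rfl)
    (integrableOn_Ioi_zero_cexp_mul_cpow ha hc₀)
    ((continuous_ofReal.continuousOn.mul (continuousOn_cexp_mul_cpow c₀ a)).aestronglyMeasurable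
      measurableSet_Ioi) ?_
    (integrableOn_Ioi_zero_cexp_mul_cpow (by rw [add_re, one_re]; linarith)
      (by rw [ofReal_re]; linarith)).norm
    ?_).2.differentiableAt.differentiableWithinAt
  · filter_upwards [ae_restrict_mem measurableSet_Ioi] with x (hx : 0 < x) c hc
    rw [norm_mul, norm_cexp_mul_cpow hx, norm_cexp_mul_cpow hx, norm_real,
      Real.norm_of_nonneg hx.le, add_re, one_re, Real.rpow_add_one hx.ne', ofReal_re]
    have := Real.exp_le_exp.2 (mul_le_mul_of_nonneg_right (hball c hc) hx.le)
    calc x * (Real.exp (c.re * x) * x ^ a.re) = Real.exp (c.re * x) * (x ^ a.re * x) := by ring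
      _ ≤ _ := by gcongr
  · refine Eventually.of_forall fun x c _ ↦ ?_
    have := (((hasDerivAt_id c).mul_const (x : ℂ)).cexp).mul_const ((x : ℂ) ^ a)
    exact this.congr_deriv (by simp only [id]; ring)

lemma integral_Ioi_cexp_mul_cpow (hs : 0 < s.re) (hc : c.re < 0) :
    ∫ x in Ioi (0 : ℝ), cexp (c * x) * (x : ℂ) ^ (s - 1) = (-c) ^ (-s) * Gamma s := by
  have hU : IsOpen {c : ℂ | c.re < 0} := isOpen_lt continuous_re continuous_const
  have hf := differentiableOn_integral_Ioi_cexp_mul_cpow (a := s - 1) (by simpa using hs)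
  have hg : DifferentiableOn ℂ (fun c : ℂ ↦ (-c) ^ (-s) * Gamma s) {c | c.re < 0} :=
    fun c (hc : c.re < 0) ↦ ((differentiableAt_id.neg.cpow_const
      (Or.inl (by simpa using hc))).mul_const _).differentiableWithinAt
  have hreal : ∀ r : ℝ, r < 0 → ∫ x in Ioi (0 : ℝ), cexp (r * x) * (x : ℂ) ^ (s - 1) =
      (-(r : ℂ)) ^ (-s) * Gamma s := fun r hr ↦ by
    have := integral_cpow_mul_exp_neg_mul_Ioi hs (neg_pos.2 hr)
    have harg : (-(r : ℂ)).arg ≠ π := by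
      rw [← ofReal_neg, arg_ofReal_of_nonneg (by linarith)]
      exact Real.pi_pos.ne
    rw [one_div, ofReal_neg, inv_cpow _ _ harg, ← cpow_neg] at this
    rw [← this]
    refine setIntegral_congr_fun measurableSet_Ioi fun x _ ↦ ?_
    rw [mul_comm, neg_mul, neg_neg]
  have hfreq : ∃ᶠ c in 𝓝[≠] (-1 : ℂ), (∫ x in Ioi (0 : ℝ), cexp (c * x) * (x : ℂ) ^ (s - 1)) =
      (-c) ^ (-s) * Gamma s := by
    have hmap : Tendsto (fun r : ℝ ↦ (r : ℂ)) (𝓝[≠] (-1)) (𝓝[≠] (-1 : ℂ)) :=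
      tendsto_nhdsWithin_iff.2 ⟨(continuous_ofReal.tendsto' _ _ (by simp)).mono_left
        nhdsWithin_le_nhds, eventually_nhdsWithin_of_forall fun r (hr : r ≠ -1) ↦
          show (r : ℂ) ≠ -1 by exact_mod_cast hr⟩
    refine hmap.frequently (Eventually.frequently ?_)
    filter_upwards [nhdsWithin_le_nhds (Iio_mem_nhds (by norm_num : (-1 : ℝ) < 0))] with r hr
    exact hreal r hr
  exact (hf.analyticOnNhd hU).eqOn_of_preconnected_of_frequently_eq (hg.analyticOnNhd hU)
    (convex_halfSpace_re_lt 0).isPreconnected (by simp) hfreq hc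

lemma integral_cexp_mul_cpow_eq_sub (hc : c ≠ 0) {T : ℝ} (hT : 1 ≤ T) :
    ∫ x in (1 : ℝ)..T, cexp (c * x) * (x : ℂ) ^ a = cexp (c * T) * (T : ℂ) ^ a / c - cexp c / c
      - a / c * ∫ x in (1 : ℝ)..T, cexp (c * x) * (x : ℂ) ^ (a - 1) := by
  have hpos : ∀ x ∈ uIcc (1 : ℝ) T, 0 < x := fun x hx ↦
    zero_lt_one.trans_le (uIcc_of_le hT ▸ hx).1
  have hcpow : ∀ x ∈ uIcc (1 : ℝ) T,
      HasDerivAt (fun y : ℝ ↦ (y : ℂ) ^ a) (a * (x : ℂ) ^ (a - 1)) x := fun x hx ↦ by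
    simpa using
      ((hasDerivAt_id (x : ℂ)).cpow_const (ofReal_mem_slitPlane.2 (hpos x hx))).comp_ofReal
  have hexp : ∀ x ∈ uIcc (1 : ℝ) T,
      HasDerivAt (fun y : ℝ ↦ cexp (c * y) / c) (cexp (c * x)) x := fun x _ ↦ by
    have := ((((hasDerivAt_id (x : ℂ)).const_mul c).cexp).comp_ofReal).div_const c
    exact this.congr_deriv (by field_simp; simp)
  have hcont : ContinuousOn (fun x : ℝ ↦ a * (x : ℂ) ^ (a - 1)) (uIcc 1 T) := fun x hx ↦
    ((continuousAt_ofReal_cpow_const x _ (Or.inr (hpos x hx).ne')).const_mul a).continuousWithinAt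
  have := intervalIntegral.integral_mul_deriv_eq_deriv_mul hcpow hexp hcont.intervalIntegrable
    ((by fun_prop : Continuous fun x : ℝ ↦ cexp (c * x)).intervalIntegrable 1 T)
  simp only [ofReal_one, one_cpow, one_mul, mul_one] at this
  rw [← intervalIntegral.integral_const_mul]
  simp only [mul_comm (cexp _)] at this ⊢
  rw [this]
  congr 1
  · ring
  · refine intervalIntegral.integral_congr fun x _ ↦ ?_
    field_simp

lemma tendsto_cexp_mul_cpow_atTop (ha : a.re < 0) (hc : c.re ≤ 0) :
    Tendsto (fun T : ℝ ↦ cexp (c * T) * (T : ℂ) ^ a) atTop (𝓝 0) :=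
  squeeze_zero_norm' ((eventually_gt_atTop 0).mono fun _ hT ↦ norm_cexp_mul_cpow_le hc hT)
    (by simpa using tendsto_rpow_neg_atTop (neg_pos.2 ha))

end

/-- The improper integral `∫₀^∞ e^{cx} x^{s-1} dx` for `Re c ≤ 0`, `c ≠ 0`, `0 < Re s < 1`,
integrated by parts once on `[1, ∞)` to make it absolutely convergent. -/
noncomputable def expMellin (s c : ℂ) : ℂ :=
  (∫ x in (0 : ℝ)..1, cexp (c * x) * (x : ℂ) ^ (s - 1)) - cexp c / c
    - (s - 1) / c * ∫ x in Ioi (1 : ℝ), cexp (c * x) * (x : ℂ) ^ (s - 2)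

section
variable {a c s : ℂ}

lemma tendsto_integral_cexp_mul_cpow_expMellin (hs0 : 0 < s.re) (hs1 : s.re < 1)
    (hc : c.re ≤ 0) (hc0 : c ≠ 0) :
    Tendsto (fun T : ℝ ↦ ∫ x in (0 : ℝ)..T, cexp (c * x) * (x : ℂ) ^ (s - 1)) atTop
      (𝓝 (expMellin s c)) := by
  have htail := intervalIntegral_tendsto_integral_Ioi 1
    (integrableOn_Ioi_one_cexp_mul_cpow (a := s - 2) (by rw [sub_re, re_ofNat]; linarith) hc)
    tendsto_id
  have hbdry := (tendsto_cexp_mul_cpow_atTop (a := s - 1) (by rw [sub_re, one_re]; linarith)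
    hc).div_const c
  rw [zero_div] at hbdry
  have hlim : Tendsto (fun T : ℝ ↦ (∫ x in (0 : ℝ)..1, cexp (c * x) * (x : ℂ) ^ (s - 1))
      + (cexp (c * T) * (T : ℂ) ^ (s - 1) / c - cexp c / c)
      - (s - 1) / c * ∫ x in (1 : ℝ)..T, cexp (c * x) * (x : ℂ) ^ (s - 2)) atTop
      (𝓝 (expMellin s c)) := by
    rw [expMellin, show ∀ z w u : ℂ, z - w - u = z + (0 - w) - u from fun _ _ _ ↦ by ring]
    exact (tendsto_const_nhds.add (hbdry.sub tendsto_const_nhds)).sub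
      (htail.const_mul ((s - 1) / c))
  refine hlim.congr' ?_
  filter_upwards [eventually_ge_atTop 1] with T hT
  have h01 := intervalIntegrable_cexp_mul_cpow (a := s - 1) (by simpa using hs0) hc zero_le_one
  have h0T := intervalIntegrable_cexp_mul_cpow (a := s - 1) (by simpa using hs0) hc
    (zero_le_one.trans hT)
  rw [← intervalIntegral.integral_add_adjacent_intervals h01 (h01.symm.trans h0T),
    integral_cexp_mul_cpow_eq_sub (a := s - 1) hc0 hT, show s - 1 - 1 = s - 2 by ring,
    add_sub_assoc]

lemma continuousOn_expMellin (hs0 : 0 < s.re) (hs1 : s.re < 1) :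
    ContinuousOn (expMellin s) ({c | c.re ≤ 0} \ {0}) := by
  intro c ⟨hc, hc0⟩
  have hbound : ∀ a : ℂ, ∀ᶠ d in 𝓝[{c | c.re ≤ 0}] c, ∀ x : ℝ, 0 < x →
      ‖cexp (d * x) * (x : ℂ) ^ a‖ ≤ x ^ a.re :=
    fun a ↦ eventually_nhdsWithin_of_forall fun d hd x hx ↦ norm_cexp_mul_cpow_le hd hx
  have hinit : ContinuousWithinAt
      (fun d : ℂ ↦ ∫ x in (0 : ℝ)..1, cexp (d * x) * (x : ℂ) ^ (s - 1)) {c | c.re ≤ 0} c := by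
    refine intervalIntegral.continuousWithinAt_of_dominated_interval
      (Eventually.of_forall fun d ↦ ?_) ((hbound (s - 1)).mono fun d hd ↦
        Eventually.of_forall fun x hx ↦ hd x (by simp_all))
      (intervalIntegral.intervalIntegrable_rpow' (by simpa using hs0))
      (Eventually.of_forall fun x _ ↦ (by fun_prop : Continuous _).continuousWithinAt)
    exact aestronglyMeasurable_cexp_mul_cpow d _ measurableSet_uIoc
      (by simp [Ioc_subset_Ioi_self])
  have htail : ContinuousWithinAt
      (fun d : ℂ ↦ ∫ x in Ioi (1 : ℝ), cexp (d * x) * (x : ℂ) ^ (s - 2)) {c | c.re ≤ 0} c := by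
    refine continuousWithinAt_of_dominated
      (Eventually.of_forall fun d ↦ aestronglyMeasurable_cexp_mul_cpow d _ measurableSet_Ioi
        (Ioi_subset_Ioi zero_le_one))
      ((hbound (s - 2)).mono fun d hd ↦ (ae_restrict_mem measurableSet_Ioi).mono
        fun x hx ↦ hd x (zero_lt_one.trans hx))
      (integrableOn_Ioi_rpow_of_lt (by rw [sub_re, re_ofNat]; linarith) one_pos)
      (Eventually.of_forall fun x ↦ (by fun_prop : Continuous _).continuousWithinAt)
  have hinv : ContinuousAt (fun d : ℂ ↦ d⁻¹) c := continuousAt_inv₀ hc0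
  refine ((hinit.sub ((continuous_exp.continuousAt.mul hinv).continuousWithinAt)).sub
    (((continuousAt_const.mul hinv).continuousWithinAt).mul htail)).mono sdiff_subset

lemma expMellin_eq (hs0 : 0 < s.re) (hs1 : s.re < 1) (hc : c.re ≤ 0) (hc0 : c ≠ 0) :
    expMellin s c = (-c) ^ (-s) * Gamma s := by
  have hslit : ∀ d ∈ {d : ℂ | d.re ≤ 0} \ {0}, -d ∈ slitPlane := by
    rintro d ⟨hd, hd0⟩
    rw [mem_slitPlane_iff, neg_re, neg_im, neg_ne_zero, neg_pos]
    by_contra! h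
    exact hd0 (ext (le_antisymm hd h.1) h.2)
  have hre : ∀ d : ℂ, d.re < 0 → d ≠ 0 := fun d hd h ↦ by simp [h] at hd
  refine Set.EqOn.of_subset_closure (s := {d : ℂ | d.re < 0})
    (g := fun d ↦ (-d) ^ (-s) * Gamma s) (fun d (hd : d.re < 0) ↦ ?_)
    (continuousOn_expMellin hs0 hs1)
    (fun d hd ↦ (((continuousAt_cpow_const (hslit d hd)).comp continuousAt_neg).mul
      continuousAt_const).continuousWithinAt)
    (fun d (hd : d.re < 0) ↦ ⟨hd.le, hre d hd⟩)
    (by rw [closure_setOfPred_re_lt]; exact sdiff_subset) ⟨hc, hc0⟩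
  show _ = (-d) ^ (-s) * Gamma s
  rw [← integral_Ioi_cexp_mul_cpow hs0 hd]
  exact tendsto_nhds_unique (tendsto_integral_cexp_mul_cpow_expMellin hs0 hs1 hd.le (hre d hd))
    (intervalIntegral_tendsto_integral_Ioi 0
      (integrableOn_Ioi_zero_cexp_mul_cpow (by simpa using hs0) hd) tendsto_id)

lemma tendsto_integral_cexp_mul_cpow (hs0 : 0 < s.re) (hs1 : s.re < 1) (hc : c.re ≤ 0)
    (hc0 : c ≠ 0) :
    Tendsto (fun T : ℝ ↦ ∫ x in (0 : ℝ)..T, cexp (c * x) * (x : ℂ) ^ (s - 1)) atTop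
      (𝓝 ((-c) ^ (-s) * Gamma s)) :=
  expMellin_eq hs0 hs1 hc hc0 ▸ tendsto_integral_cexp_mul_cpow_expMellin hs0 hs1 hc hc0

lemma integral_cexp_mul_abs_cpow (ha : -1 < a.re) (hc : c.re = 0) {T : ℝ} (hT : 0 ≤ T) :
    ∫ x in -T..T, cexp (c * x) * ((|x| : ℝ) : ℂ) ^ a =
      (∫ x in (0 : ℝ)..T, cexp (-c * x) * (x : ℂ) ^ a)
        + ∫ x in (0 : ℝ)..T, cexp (c * x) * (x : ℂ) ^ a := by
  set f := fun x : ℝ ↦ cexp (c * x) * ((|x| : ℝ) : ℂ) ^ a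
  have hpos : EqOn f (fun x : ℝ ↦ cexp (c * x) * (x : ℂ) ^ a) (uIcc 0 T) := fun x hx ↦ by
    simp only [f, abs_of_nonneg (uIcc_of_le hT ▸ hx).1]
  have hneg : EqOn (fun x ↦ f (-x)) (fun x : ℝ ↦ cexp (-c * x) * (x : ℂ) ^ a) (uIcc 0 T) :=
    fun x hx ↦ by
      simp only [f, abs_neg, abs_of_nonneg (uIcc_of_le hT ▸ hx).1, ofReal_neg, mul_neg, neg_mul]
  have hint_neg : IntervalIntegrable (fun x ↦ f (-x)) volume 0 T :=
    (intervalIntegrable_cexp_mul_cpow ha (by simp [hc]) hT).congr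
      (hneg.symm.mono uIoc_subset_uIcc)
  have hint_pos : IntervalIntegrable f volume 0 T :=
    (intervalIntegrable_cexp_mul_cpow ha hc.le hT).congr (hpos.symm.mono uIoc_subset_uIcc)
  have hint_neg' : IntervalIntegrable f volume (-T) 0 := by
    simpa using ((IntervalIntegrable.iff_comp_neg (f := fun x ↦ f (-x))).1 hint_neg).symm
  rw [← intervalIntegral.integral_add_adjacent_intervals hint_neg' hint_pos,
    ← intervalIntegral.integral_congr hneg, ← intervalIntegral.integral_congr hpos,
    intervalIntegral.integral_comp_neg, neg_zero]

end

lemma ofReal_mul_I_cpow_add_neg_cpow (r : ℝ) (hr : 0 < r) (a : ℂ) :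
    ((r : ℂ) * I) ^ a + (-((r : ℂ) * I)) ^ a = 2 * (r : ℂ) ^ a * cos (π * a / 2) := by
  have hr0 : (r : ℂ) ≠ 0 := ofReal_ne_zero.2 hr.ne'
  rw [← mul_neg, cpow_def_of_ne_zero (mul_ne_zero hr0 I_ne_zero),
    cpow_def_of_ne_zero (mul_ne_zero hr0 (neg_ne_zero.2 I_ne_zero)), cpow_def_of_ne_zero hr0,
    log_ofReal_mul hr I_ne_zero, log_ofReal_mul hr (neg_ne_zero.2 I_ne_zero), log_I, log_neg_I,
    ofReal_log hr.le, cos, add_mul, add_mul, exp_add, exp_add]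
  ring_nf

/-- For every `s ∈ ℂ` with `0 < Re s < 1`, the limit as `T → ∞` of
`∫_{−T}^{T} e^{2πix} |x|^{s−1} dx` exists and equals `2 (2π)^{−s} Γ(s) cos(πs/2)`. -/
theorem exterior_square_G0_integral (s : ℂ) (h0 : 0 < s.re) (h1 : s.re < 1) :
    Tendsto
      (fun T : ℝ => ∫ x in (-T)..T,
        Complex.exp (2 * Real.pi * Complex.I * x) * ((|x| : ℝ) : ℂ) ^ (s - 1))
      atTop
      (nhds (2 * (2 * (Real.pi : ℂ)) ^ (-s) * Complex.Gamma s *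
        Complex.cos ((Real.pi : ℂ) * s / 2))) := by
  have hc : (2 * π * I : ℂ).re = 0 := by simp
  have hc0 : (2 * π * I : ℂ) ≠ 0 := by simp [Real.pi_ne_zero, I_ne_zero]
  have hplus := tendsto_integral_cexp_mul_cpow h0 h1 hc.le hc0
  have hminus := tendsto_integral_cexp_mul_cpow h0 h1 (by simp [hc]) (neg_ne_zero.2 hc0)
  have hvalue : (-(-(2 * π * I : ℂ))) ^ (-s) * Gamma s + (-(2 * π * I : ℂ)) ^ (-s) * Gamma s =
      2 * (2 * (π : ℂ)) ^ (-s) * Gamma s * cos (π * s / 2) := by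
    have := ofReal_mul_I_cpow_add_neg_cpow (2 * π) (by positivity) (-s)
    push_cast at this
    rw [neg_neg, ← add_mul, this, mul_neg, neg_div, cos_neg]
    ring
  refine (hvalue ▸ hminus.add hplus).congr' ?_
  filter_upwards [eventually_ge_atTop 0] with T hT
  exact (integral_cexp_mul_abs_cpow (by simpa using h0) hc hT).symm
end
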